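/- arXiv:2411.17166 — 11 statements merged into one kernel-verified Lean document; each statement's English description precedes it below -/
import Mathlib

section
/- The function f(w) = √(D_p(w)) is continuous on ℂ ∖ I_p and analytic on ℂ ∖ cl(I_p) (the closure of I_p). Moreover, for every w₀ ∈ I_p one has D_p(w₀) ∈ (−∞, 0), the limit of f(w) as w → w₀ from the right equals sgn(Im(w₀))·i·√(−D_p(w₀)), and the limit of f(w) as w → w₀ from the left equals −sgn(Im(w₀))·i·√(−D_p(w₀)). -/
/-!
With `A = 𝒜`, `b = 1 - 2a`, `r = 2√(a(1-a)) > 0` and `z = A w + b` we have `D_p = z² + r²`.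
This is a negative real exactly when `z` is purely imaginary with `|Im z| > r`, i.e. on `I_p`, and
it avoids `(-∞, 0]` off the closure of `I_p`; this gives continuity and analyticity of `√D_p`.
Near `w₀ ∈ I_p`, `Im D_p(w) = 2 A² (Re w - Re w₀) Im w`, so from the right `D_p(w)` tends to
`D_p(w₀) < 0` through the half plane on the side `sgn (Im w₀)`, from the left through the other
one, and the principal square root tends to `i √(-D_p(w₀))` from above the cut and to
`-i √(-D_p(w₀))` from below.
-/
open Set Filter Topology Complex

namespace Complex

theorem continuousWithinAt_cpow_const_of_re_neg_of_im_zero {z : ℂ} (hre : z.re < 0)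
    (him : z.im = 0) (s : ℂ) : ContinuousWithinAt (· ^ s) {z : ℂ | 0 ≤ z.im} z := by
  have hz : z ≠ 0 := by rintro rfl; simp at hre
  refine (continuous_exp.continuousAt.comp_continuousWithinAt
    ((continuousWithinAt_log_of_re_neg_of_im_zero hre him).mul
      continuousWithinAt_const)).congr_of_eventuallyEq ?_ (cpow_def_of_ne_zero hz s)
  filter_upwards [nhdsWithin_le_nhds (eventually_ne_nhds hz)] with w hw
  exact cpow_def_of_ne_zero hw s

theorem tendsto_cpow_const_nhdsWithin_im_neg_of_neg {t : ℝ} (ht : t < 0) (s : ℂ) :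
    Tendsto (· ^ s) (𝓝[{z : ℂ | z.im < 0}] (t : ℂ))
      (𝓝 ((-t : ℂ) ^ s * exp (-(Real.pi * I * s)))) := by
  have ht' : (t : ℂ) ≠ 0 := ofReal_ne_zero.2 ht.ne
  have hv : exp ((Real.log ‖(t : ℂ)‖ - Real.pi * I) * s) =
      (-t : ℂ) ^ s * exp (-(Real.pi * I * s)) := by
    rw [cpow_def_of_ne_zero (neg_ne_zero.2 ht'), ← exp_add, ← ofReal_neg,
      ← ofReal_log (by linarith), norm_real, Real.norm_of_nonpos ht.le]
    ring_nf
  rw [← hv]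
  refine (continuous_exp.continuousAt.tendsto.comp
    ((tendsto_log_nhdsWithin_im_neg_of_re_neg_of_im_zero (by simpa) (by simp)).mul_const
      s)).congr' ?_
  filter_upwards [nhdsWithin_le_nhds (eventually_ne_nhds ht')] with w hw
  exact (cpow_def_of_ne_zero hw s).symm

theorem tendsto_cpow_one_half_of_eventually_sign_im {α : Type*} {l : Filter α} {g : α → ℂ}
    {t s : ℝ} (ht : t < 0) (hg : Tendsto g l (𝓝 t)) (him : ∀ᶠ x in l, 0 < s * (g x).im) :
    Tendsto (fun x => g x ^ ((1 : ℂ) / 2)) l (𝓝 (Real.sign s * I * √(-t))) := by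
  have hsqrt : ((-t : ℝ) : ℂ) ^ ((1 : ℂ) / 2) = √(-t) := by
    rw [Real.sqrt_eq_rpow, ofReal_cpow (by linarith)]; norm_num
  have hI : exp (Real.pi * I * ((1 : ℂ) / 2)) = I := by
    rw [show (Real.pi : ℂ) * I * (1 / 2) = Real.pi / 2 * I by ring, exp_pi_div_two_mul_I]
  rcases lt_trichotomy s 0 with hs | rfl | hs
  · have hl : Tendsto g l (𝓝[{z | z.im < 0}] t) :=
      tendsto_nhdsWithin_iff.2 ⟨hg, him.mono fun x hx => neg_of_mul_pos_right hx hs.le⟩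
    have hv : (-t : ℂ) ^ ((1 : ℂ) / 2) * exp (-(Real.pi * I * ((1 : ℂ) / 2)))
        = Real.sign s * I * √(-t) := by
      rw [Real.sign_of_neg hs, ← ofReal_neg, hsqrt, exp_neg, hI, inv_I]
      push_cast; ring
    rw [← hv]
    exact (tendsto_cpow_const_nhdsWithin_im_neg_of_neg ht _).comp hl
  · simp only [zero_mul, lt_self_iff_false, eventually_false_iff_eq_bot] at him
    rw [him]; exact tendsto_bot
  · have hl : Tendsto g l (𝓝[{z | 0 ≤ z.im}] t) :=
      tendsto_nhdsWithin_iff.2 ⟨hg, him.mono fun x hx => (pos_of_mul_pos_right hx hs.le).le⟩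
    have hv : (t : ℂ) ^ ((1 : ℂ) / 2) = Real.sign s * I * √(-t) := by
      rw [Real.sign_of_pos hs, ofReal_cpow_of_nonpos ht.le, ← ofReal_neg, hsqrt, hI]
      push_cast; ring
    rw [← hv]
    exact ((continuousWithinAt_cpow_const_of_re_neg_of_im_zero (by simpa) (by simp)
      _).tendsto).comp hl

end Complex

lemma re_sq_add_sq (z : ℂ) (r : ℝ) :
    (z ^ 2 + ((r ^ 2 : ℝ) : ℂ)).re = z.re ^ 2 - z.im ^ 2 + r ^ 2 := by
  simp [sq]

lemma im_sq_add_sq (z : ℂ) (r : ℝ) : (z ^ 2 + ((r ^ 2 : ℝ) : ℂ)).im = 2 * z.re * z.im := by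
  simp [sq]; ring

lemma sq_add_sq_im_eq_zero_and_re_neg_iff {r : ℝ} (hr : 0 ≤ r) (z : ℂ) :
    (z ^ 2 + ((r ^ 2 : ℝ) : ℂ)).im = 0 ∧ (z ^ 2 + ((r ^ 2 : ℝ) : ℂ)).re < 0 ↔
      z.re = 0 ∧ r < |z.im| := by
  have hsq : r < |z.im| ↔ r ^ 2 < z.im ^ 2 := by rw [sq_lt_sq, abs_of_nonneg hr]
  rw [re_sq_add_sq, im_sq_add_sq, hsq]
  constructor
  · rintro ⟨him, hre⟩
    have hre0 : z.re = 0 := by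
      rcases mul_eq_zero.1 him with h | h
      · simpa using h
      · nlinarith [sq_nonneg z.re]
    exact ⟨hre0, by nlinarith⟩
  · rintro ⟨hre, hlt⟩
    exact ⟨by simp [hre], by nlinarith⟩

lemma sq_add_sq_notMem_slitPlane_iff {r : ℝ} (hr : 0 < r) (z : ℂ) :
    z ^ 2 + ((r ^ 2 : ℝ) : ℂ) ∉ slitPlane ↔ z.re = 0 ∧ r ≤ |z.im| := by
  have hsq : r ≤ |z.im| ↔ r ^ 2 ≤ z.im ^ 2 := by rw [sq_le_sq, abs_of_pos hr]
  rw [mem_slitPlane_iff, re_sq_add_sq, im_sq_add_sq, hsq, not_or, not_lt, not_not]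
  constructor
  · rintro ⟨hre, him⟩
    have hre0 : z.re = 0 := by
      rcases mul_eq_zero.1 him with h | h
      · simpa using h
      · nlinarith [sq_nonneg z.re]
    exact ⟨hre0, by nlinarith⟩
  · rintro ⟨hre, hle⟩
    exact ⟨by nlinarith, by simp [hre]⟩

lemma setOf_re_eq_zero_and_le_abs_im_subset_closure {r : ℝ} (hr : 0 < r) :
    {z : ℂ | z.re = 0 ∧ r ≤ |z.im|} ⊆ closure {z : ℂ | z.re = 0 ∧ r < |z.im|} := by
  rintro z ⟨hre, hle⟩
  have hlim : Tendsto (fun t : ℝ => (t : ℂ) * z) (𝓝[>] 1) (𝓝 z) :=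
    ((continuous_ofReal.mul continuous_const).tendsto' 1 z (by simp)).mono_left
      nhdsWithin_le_nhds
  refine mem_closure_of_tendsto hlim ?_
  filter_upwards [self_mem_nhdsWithin] with t (ht : 1 < t)
  refine ⟨by simp [hre], ?_⟩
  rw [im_ofReal_mul, abs_mul, abs_of_pos (by linarith)]
  nlinarith

lemma affine_re_eq_zero_and_lt_abs_im_iff {A : ℝ} (hA : A ≠ 0) (b r : ℝ) (w : ℂ) :
    ((A : ℂ) * w + b).re = 0 ∧ r < |((A : ℂ) * w + b).im| ↔
      w.re = -b / A ∧ r / |A| < |w.im| := by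
  simp only [add_re, re_ofReal_mul, ofReal_re, add_im, im_ofReal_mul, ofReal_im, add_zero,
    abs_mul]
  rw [eq_div_iff hA, div_lt_iff₀ (abs_pos.2 hA), mul_comm |w.im|]
  constructor <;> rintro ⟨h1, h2⟩ <;> exact ⟨by linarith, h2⟩

def affineSqAddSq (A b r : ℝ) (w : ℂ) : ℂ := ((A : ℂ) * w + b) ^ 2 + ((r ^ 2 : ℝ) : ℂ)

lemma analyticAt_affineSqAddSq (A b r : ℝ) (w : ℂ) :
    AnalyticAt ℂ (affineSqAddSq A b r) w := by
  unfold affineSqAddSq; fun_prop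

lemma continuous_affineSqAddSq (A b r : ℝ) : Continuous (affineSqAddSq A b r) := by
  unfold affineSqAddSq; fun_prop

lemma affineSqAddSq_im_eq_zero_and_re_neg_iff {A : ℝ} (hA : A ≠ 0) (b : ℝ) {r : ℝ}
    (hr : 0 ≤ r) (w : ℂ) :
    (affineSqAddSq A b r w).im = 0 ∧ (affineSqAddSq A b r w).re < 0 ↔
      w.re = -b / A ∧ r / |A| < |w.im| :=
  (sq_add_sq_im_eq_zero_and_re_neg_iff hr _).trans (affine_re_eq_zero_and_lt_abs_im_iff hA b r w)

theorem continuousOn_affineSqAddSq_cpow_one_half {A : ℝ} (hA : A ≠ 0) (b : ℝ) {r : ℝ}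
    (hr : 0 ≤ r) :
    ContinuousOn (fun w => affineSqAddSq A b r w ^ ((1 : ℂ) / 2))
      {w : ℂ | w.re = -b / A ∧ r / |A| < |w.im|}ᶜ := by
  intro w hw
  have hD := not_and_or.1 (mt (affineSqAddSq_im_eq_zero_and_re_neg_iff hA b hr w).1 hw)
  exact ((continuousAt_cpow_const_of_re_pos (hD.symm.imp not_lt.1 id)
    (by norm_num : (0 : ℝ) < ((1 : ℂ) / 2).re)).comp
      (continuous_affineSqAddSq A b r).continuousAt).continuousWithinAt

theorem analyticOnNhd_affineSqAddSq_cpow_one_half {A : ℝ} (hA : A ≠ 0) (b : ℝ) {r : ℝ}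
    (hr : 0 < r) :
    AnalyticOnNhd ℂ (fun w => affineSqAddSq A b r w ^ ((1 : ℂ) / 2))
      (closure {w : ℂ | w.re = -b / A ∧ r / |A| < |w.im|})ᶜ := by
  intro w hw
  refine (analyticAt_affineSqAddSq A b r w).cpow analyticAt_const ?_
  let L : ℂ ≃ₜ ℂ :=
    (Homeomorph.mulLeft₀ (A : ℂ) (ofReal_ne_zero.2 hA)).trans (Homeomorph.addRight b)
  have hS : {w : ℂ | w.re = -b / A ∧ r / |A| < |w.im|} =
      L ⁻¹' {z : ℂ | z.re = 0 ∧ r < |z.im|} :=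
    Set.ext fun w => (affine_re_eq_zero_and_lt_abs_im_iff hA b r w).symm
  rw [mem_compl_iff, hS, ← L.preimage_closure] at hw
  by_contra h
  exact hw (setOf_re_eq_zero_and_le_abs_im_subset_closure hr
    ((sq_add_sq_notMem_slitPlane_iff hr _).1 h))

lemma eventually_sign_im_affineSqAddSq {A : ℝ} (hA : A ≠ 0) (b r : ℝ) {w₀ : ℂ}
    (hre : w₀.re = -b / A) (him : w₀.im ≠ 0) :
    (∀ᶠ w in 𝓝[{w | w₀.re < w.re}] w₀, 0 < w₀.im * (affineSqAddSq A b r w).im) ∧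
      ∀ᶠ w in 𝓝[{w | w.re < w₀.re}] w₀, 0 < -w₀.im * (affineSqAddSq A b r w).im := by
  have hline : A * w₀.re + b = 0 := by rw [hre]; field_simp; ring
  have hprod (w : ℂ) : w₀.im * (affineSqAddSq A b r w).im =
      2 * A ^ 2 * (w.re - w₀.re) * (w₀.im * w.im) := by
    rw [affineSqAddSq, im_sq_add_sq]
    simp only [add_re, re_ofReal_mul, ofReal_re, add_im, im_ofReal_mul, ofReal_im, add_zero]
    linear_combination (2 * A * w.im * w₀.im) * hline
  have hsame : ∀ᶠ w in 𝓝 w₀, 0 < w₀.im * w.im :=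
    continuousAt_const.eventually_lt (f := fun _ => (0 : ℝ)) (g := fun w : ℂ => w₀.im * w.im)
      (by fun_prop) (mul_self_pos.2 him)
  constructor
  · filter_upwards [nhdsWithin_le_nhds hsame, self_mem_nhdsWithin]
      with w hw (hlt : w₀.re < w.re)
    rw [hprod]
    exact mul_pos (mul_pos (by positivity) (sub_pos.2 hlt)) hw
  · filter_upwards [nhdsWithin_le_nhds hsame, self_mem_nhdsWithin]
      with w hw (hlt : w.re < w₀.re)
    rw [neg_mul, hprod, neg_pos]
    exact mul_neg_of_neg_of_pos (mul_neg_of_pos_of_neg (by positivity) (sub_neg.2 hlt)) hw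

theorem tendsto_affineSqAddSq_cpow_one_half_nhdsWithin {A : ℝ} (hA : A ≠ 0) (b : ℝ) {r : ℝ}
    (hr : 0 < r) {w₀ : ℂ} (hw₀ : w₀.re = -b / A ∧ r / |A| < |w₀.im|) :
    Tendsto (fun w => affineSqAddSq A b r w ^ ((1 : ℂ) / 2)) (𝓝[{w | w₀.re < w.re}] w₀)
        (𝓝 (Real.sign w₀.im * I * √(-(affineSqAddSq A b r w₀).re))) ∧
      Tendsto (fun w => affineSqAddSq A b r w ^ ((1 : ℂ) / 2)) (𝓝[{w | w.re < w₀.re}] w₀)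
        (𝓝 (-(Real.sign w₀.im * I * √(-(affineSqAddSq A b r w₀).re)))) := by
  obtain ⟨him₀, hre₀⟩ := (affineSqAddSq_im_eq_zero_and_re_neg_iff hA b hr.le w₀).2 hw₀
  obtain ⟨hright, hleft⟩ := eventually_sign_im_affineSqAddSq hA b r hw₀.1
    (abs_pos.1 ((div_pos hr (abs_pos.2 hA)).trans hw₀.2))
  have hD (s : Set ℂ) : Tendsto (affineSqAddSq A b r) (𝓝[s] w₀)
      (𝓝 ((affineSqAddSq A b r w₀).re : ℂ)) := by
    rw [show ((affineSqAddSq A b r w₀).re : ℂ) = affineSqAddSq A b r w₀ from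
      Complex.ext rfl (by rw [ofReal_im, him₀])]
    exact (continuous_affineSqAddSq A b r).continuousAt.mono_left nhdsWithin_le_nhds
  refine ⟨tendsto_cpow_one_half_of_eventually_sign_im hre₀ (hD _) hright, ?_⟩
  rw [← neg_mul, ← neg_mul, ← ofReal_neg, ← Real.sign_neg]
  exact tendsto_cpow_one_half_of_eventually_sign_im hre₀ (hD _) hleft

theorem stmt2 (a α α' : ℝ) (ha : a ∈ Ioo (0 : ℝ) 1) (hαα : α ≠ α')
    (𝒜 : ℝ) (h𝒜 : 𝒜 = α' - α)
    (Dp : ℂ → ℂ)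
    (hDp : ∀ w : ℂ, Dp w = ((𝒜 : ℂ) * w + ((1 - 2 * a : ℝ) : ℂ)) ^ 2 + ((4 * a * (1 - a) : ℝ) : ℂ))
    (Ip : Set ℂ)
    (hIp : Ip = {w : ℂ | w.re = -(1 - 2 * a) / 𝒜 ∧ 2 * Real.sqrt (a * (1 - a)) / |𝒜| < |w.im|})
    (f : ℂ → ℂ) (hf : ∀ w : ℂ, f w = (Dp w) ^ ((1 : ℂ) / 2)) :
    -- continuity and analyticity
    ContinuousOn f Ipᶜ
    ∧ AnalyticOnNhd ℂ f (closure Ip)ᶜ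
    -- D_p is a negative real on I_p
    ∧ (∀ w₀ ∈ Ip, (Dp w₀).im = 0 ∧ (Dp w₀).re < 0)
    -- one-sided limits
    ∧ (∀ w₀ ∈ Ip,
        Tendsto f (nhdsWithin w₀ ({w : ℂ | w₀.re < w.re} ∩ Ipᶜ))
          (nhds (((Real.sign w₀.im : ℝ) : ℂ) * Complex.I * (Real.sqrt (-(Dp w₀).re) : ℝ)))
        ∧ Tendsto f (nhdsWithin w₀ ({w : ℂ | w.re < w₀.re} ∩ Ipᶜ))
          (nhds (-(((Real.sign w₀.im : ℝ) : ℂ) * Complex.I * (Real.sqrt (-(Dp w₀).re) : ℝ))))) := by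
  obtain ⟨ha0, ha1⟩ := ha
  have hA : 𝒜 ≠ 0 := h𝒜 ▸ sub_ne_zero.2 hαα.symm
  set b := 1 - 2 * a
  set r := 2 * √(a * (1 - a))
  have hr : 0 < r := by have : 0 < a * (1 - a) := mul_pos ha0 (by linarith); positivity
  have hk : 4 * a * (1 - a) = r ^ 2 := by
    rw [mul_pow, Real.sq_sqrt (by nlinarith)]; ring
  obtain rfl : Dp = affineSqAddSq 𝒜 b r := funext fun w => by rw [hDp, hk, affineSqAddSq]
  obtain rfl : f = _ := funext hf
  subst hIp
  refine ⟨continuousOn_affineSqAddSq_cpow_one_half hA b hr.le,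
    analyticOnNhd_affineSqAddSq_cpow_one_half hA b hr,
    fun w₀ hw₀ => (affineSqAddSq_im_eq_zero_and_re_neg_iff hA b hr.le w₀).2 hw₀,
    fun w₀ hw₀ => ?_⟩
  obtain ⟨hright, hleft⟩ := tendsto_affineSqAddSq_cpow_one_half_nhdsWithin hA b hr hw₀
  exact ⟨hright.mono_left (nhdsWithin_mono _ inter_subset_left),
    hleft.mono_left (nhdsWithin_mono _ inter_subset_left)⟩
end

section
/- Define f(w) = Im(√(D_p(w)))/Im(w) for w ∈ ℂ ∖ (I_p ∪ ℝ); this equals (√(D_p(w)) − √(D_p(conj(w))))/(w − conj(w)). Then f is continuous on ℂ ∖ (I_p ∪ ℝ), and the function obtained by additionally setting f(t) = 𝒜(𝒜t + (1−2a))/√(D_p(t)) for t ∈ ℝ is continuous on ℂ ∖ I_p. Moreover, for w₀ ∈ I_p, the limit of f(w) as w → w₀ from the right equals √(−D_p(w₀))/|Im(w₀)|, and the limit from the left equals −√(−D_p(w₀))/|Im(w₀)|. -/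
/-!
Write `D_p(w) = (𝒜w + c)² + r` with `c = 1 - 2a` and `r = 4a(1 - a) > 0`; `quadDisc`,
`quadCut` and `quadRatio` are `D_p`, `I_p` and `f` for general `𝒜, c, r`.
`D_p(w)` is a negative real exactly on `I_p`, so off `I_p` the principal square root of `D_p`
is continuous and commutes with conjugation; this gives the quotient identity and continuity
off `I_p ∪ ℝ`. Near a real point, `2 Re √D · Im √D = Im D = 2 (𝒜 Re w + c) 𝒜 Im w`, so
`f = 𝒜 (𝒜 Re w + c) / Re √D` there, a continuous function taking the prescribed values on `ℝ`.
At `w₀ ∈ I_p` we have `Im D(w) = 2𝒜² (Re w - Re w₀) Im w`, so `Im √D(w) / Im w` is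
`± |Im √D(w)| / |Im w|` according to the side of `w₀` on which `w` lies, while
`|Im √D| = √((|D| - Re D) / 2)` is continuous and equals `√(-D(w₀))` at `w₀`.
-/

open Set Filter Topology ComplexConjugate

namespace Complex

lemma cpow_half_mul_self (z : ℂ) : z ^ (1 / 2 : ℂ) * z ^ (1 / 2 : ℂ) = z := by
  rw [← sq, one_div]; exact cpow_ofNat_inv_pow z 2

lemma two_mul_re_mul_im_cpow_half (z : ℂ) :
    2 * (z ^ (1 / 2 : ℂ)).re * (z ^ (1 / 2 : ℂ)).im = z.im := by
  conv_rhs => rw [← cpow_half_mul_self z]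
  rw [mul_im]; ring

lemma cpow_half_ofReal {x : ℝ} (hx : 0 ≤ x) : (x : ℂ) ^ (1 / 2 : ℂ) = (√x : ℂ) := by
  rw [Real.sqrt_eq_rpow, ofReal_cpow hx]; norm_num

lemma ofReal_im_div_im (u w : ℂ) (hw : w.im ≠ 0) :
    ((u.im / w.im : ℝ) : ℂ) = (u - conj u) / (w - conj w) := by
  rw [sub_conj, sub_conj]
  push_cast
  field_simp [I_ne_zero, ofReal_ne_zero.mpr hw]

lemma cpow_half_im_div_of_mul_pos {z : ℂ} {y : ℝ} (h : 0 < z.im * y) :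
    (z ^ (1 / 2 : ℂ)).im / y = √((‖z‖ - z.re) / 2) / |y| := by
  rw [one_div]
  rcases pos_and_pos_or_neg_and_neg_of_mul_pos h with ⟨hz, hy⟩ | ⟨hz, hy⟩
  · rw [cpow_inv_two_im_eq_sqrt hz.le, abs_of_pos hy]
  · rw [cpow_inv_two_im_eq_neg_sqrt hz, abs_of_neg hy, neg_div, div_neg]

lemma cpow_half_im_div_of_mul_neg {z : ℂ} {y : ℝ} (h : z.im * y < 0) :
    (z ^ (1 / 2 : ℂ)).im / y = -(√((‖z‖ - z.re) / 2) / |y|) := by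
  rw [← abs_neg y, ← cpow_half_im_div_of_mul_pos (by linarith [mul_neg z.im y]), div_neg, neg_neg]

end Complex

section QuadDisc

variable (A c r : ℝ)

def quadDisc (w : ℂ) : ℂ := ((A : ℂ) * w + (c : ℂ)) ^ 2 + (r : ℂ)

def quadCut : Set ℂ := {w | A * w.re + c = 0 ∧ r < (A * w.im) ^ 2}

noncomputable def quadRatio (w : ℂ) : ℝ :=
  if w.im = 0 then A * (A * w.re + c) / √((A * w.re + c) ^ 2 + r)
  else (quadDisc A c r w ^ (1 / 2 : ℂ)).im / w.im

variable {A c r}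

lemma quadDisc_re (w : ℂ) :
    (quadDisc A c r w).re = (A * w.re + c) ^ 2 - (A * w.im) ^ 2 + r := by
  simp [quadDisc, sq]

lemma quadDisc_im (w : ℂ) : (quadDisc A c r w).im = 2 * (A * w.re + c) * (A * w.im) := by
  simp [quadDisc, sq]; ring

lemma continuous_quadDisc : Continuous (quadDisc A c r) := by
  unfold quadDisc; fun_prop

lemma quadDisc_conj (w : ℂ) : quadDisc A c r (conj w) = conj (quadDisc A c r w) := by
  simp [quadDisc]

lemma quadDisc_ofReal (t : ℝ) : quadDisc A c r t = (((A * t + c) ^ 2 + r : ℝ) : ℂ) := by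
  simp [quadDisc]

lemma quadDisc_im_of_mem_quadCut {w₀ : ℂ} (hw₀ : w₀ ∈ quadCut A c r) (w : ℂ) :
    (quadDisc A c r w).im = 2 * A ^ 2 * (w.re - w₀.re) * w.im := by
  rw [quadDisc_im, show c = -(A * w₀.re) by linarith [hw₀.1]]; ring

lemma im_ne_zero_of_mem_quadCut (hr : 0 ≤ r) {w : ℂ} (hw : w ∈ quadCut A c r) : w.im ≠ 0 :=
  fun him ↦ by simpa [him] using hr.trans_lt hw.2

lemma quadDisc_nonneg_re_or_im_ne_zero (hr : 0 ≤ r) {w : ℂ} (hw : w ∉ quadCut A c r) :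
    0 ≤ (quadDisc A c r w).re ∨ (quadDisc A c r w).im ≠ 0 := by
  by_contra! h
  obtain ⟨hre, him⟩ := h
  rw [quadDisc_re] at hre
  rw [quadDisc_im, mul_eq_zero, mul_eq_zero] at him
  rcases him with (htwo | hline) | haxis
  · norm_num at htwo
  · exact hw ⟨hline, by nlinarith⟩
  · nlinarith [sq_nonneg (A * w.re + c)]

lemma arg_quadDisc_ne_pi (hr : 0 ≤ r) {w : ℂ} (hw : w ∉ quadCut A c r) :
    (quadDisc A c r w).arg ≠ Real.pi := by
  rw [Ne, Complex.arg_eq_pi_iff, not_and_or, not_lt]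
  exact quadDisc_nonneg_re_or_im_ne_zero hr hw

lemma continuousAt_cpow_half_quadDisc (hr : 0 ≤ r) {w : ℂ} (hw : w ∉ quadCut A c r) :
    ContinuousAt (fun w ↦ quadDisc A c r w ^ (1 / 2 : ℂ)) w :=
  (Complex.continuousAt_cpow_const_of_re_pos (quadDisc_nonneg_re_or_im_ne_zero hr hw)
    (by norm_num)).comp continuous_quadDisc.continuousAt

lemma quadRatio_of_im_ne_zero {w : ℂ} (hw : w.im ≠ 0) :
    quadRatio A c r w = (quadDisc A c r w ^ (1 / 2 : ℂ)).im / w.im :=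
  if_neg hw

lemma quadRatio_ofReal (t : ℝ) :
    quadRatio A c r t = A * (A * t + c) / √((A * t + c) ^ 2 + r) := by
  simp [quadRatio]

lemma ofReal_quadRatio (hr : 0 ≤ r) {w : ℂ} (him : w.im ≠ 0) (hw : w ∉ quadCut A c r) :
    (quadRatio A c r w : ℂ) =
      (quadDisc A c r w ^ (1 / 2 : ℂ) - quadDisc A c r (conj w) ^ (1 / 2 : ℂ)) / (w - conj w) := by
  rw [quadRatio_of_im_ne_zero him, Complex.ofReal_im_div_im _ _ him, quadDisc_conj,
    Complex.conj_cpow _ _ (arg_quadDisc_ne_pi hr hw), map_div₀, map_one, map_ofNat]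

lemma quadRatio_eq_div_re_cpow_half (hr : 0 ≤ r) {w : ℂ}
    (hw : (quadDisc A c r w ^ (1 / 2 : ℂ)).re ≠ 0) :
    quadRatio A c r w = A * (A * w.re + c) / (quadDisc A c r w ^ (1 / 2 : ℂ)).re := by
  by_cases him : w.im = 0
  · lift w to ℝ using him with t
    rw [quadRatio_ofReal, quadDisc_ofReal, Complex.cpow_half_ofReal (by positivity)]
    simp only [Complex.ofReal_re]
  · have hprod := Complex.two_mul_re_mul_im_cpow_half (quadDisc A c r w)
    rw [quadDisc_im] at hprod
    rw [quadRatio_of_im_ne_zero him, div_eq_div_iff him hw]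
    linarith

lemma continuousAt_quadRatio_ofReal (hr : 0 < r) (t : ℝ) :
    ContinuousAt (quadRatio A c r) t := by
  have hcut : (t : ℂ) ∉ quadCut A c r := fun h ↦
    im_ne_zero_of_mem_quadCut hr.le h (Complex.ofReal_im t)
  have hsqrt := continuousAt_cpow_half_quadDisc (A := A) (c := c) hr.le hcut
  have hre_pos : 0 < (quadDisc A c r t ^ (1 / 2 : ℂ)).re := by
    rw [quadDisc_ofReal, Complex.cpow_half_ofReal (by positivity), Complex.ofReal_re]
    positivity
  have hre_ne : ∀ᶠ w in 𝓝 (t : ℂ), (quadDisc A c r w ^ (1 / 2 : ℂ)).re ≠ 0 :=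
    (Complex.continuous_re.continuousAt.comp hsqrt).eventually_ne hre_pos.ne'
  refine ContinuousAt.congr ?_ (hre_ne.mono fun w hw ↦
    (quadRatio_eq_div_re_cpow_half hr.le hw).symm)
  exact (by fun_prop : Continuous fun w : ℂ ↦ A * (A * w.re + c)).continuousAt.div
    (Complex.continuous_re.continuousAt.comp hsqrt) hre_pos.ne'

lemma continuousAt_quadRatio_of_im_ne_zero (hr : 0 ≤ r) {w : ℂ} (hw : w ∉ quadCut A c r)
    (him : w.im ≠ 0) : ContinuousAt (quadRatio A c r) w := by
  have hcont : ContinuousAt (fun w ↦ (quadDisc A c r w ^ (1 / 2 : ℂ)).im / w.im) w :=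
    (Complex.continuous_im.continuousAt.comp (continuousAt_cpow_half_quadDisc hr hw)).div
      Complex.continuous_im.continuousAt him
  refine hcont.congr ?_
  filter_upwards [Complex.continuous_im.continuousAt.eventually_ne him] with w hw
  exact (quadRatio_of_im_ne_zero hw).symm

lemma continuousOn_quadRatio (hr : 0 < r) : ContinuousOn (quadRatio A c r) (quadCut A c r)ᶜ := by
  intro w hw
  refine ContinuousAt.continuousWithinAt ?_
  by_cases him : w.im = 0
  · lift w to ℝ using him with t
    exact continuousAt_quadRatio_ofReal hr t
  · exact continuousAt_quadRatio_of_im_ne_zero hr.le hw him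

lemma tendsto_sqrt_quadDisc_div_abs_im (hr : 0 ≤ r) {w₀ : ℂ} (hw₀ : w₀ ∈ quadCut A c r) :
    Tendsto (fun w ↦ √((‖quadDisc A c r w‖ - (quadDisc A c r w).re) / 2) / |w.im|) (𝓝 w₀)
      (𝓝 (√(-(quadDisc A c r w₀).re) / |w₀.im|)) := by
  have him : (quadDisc A c r w₀).im = 0 := by simp [quadDisc_im_of_mem_quadCut hw₀]
  have hnorm : ‖quadDisc A c r w₀‖ = -(quadDisc A c r w₀).re := by
    rw [← Complex.abs_re_eq_norm.mpr him, abs_of_neg]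
    rw [quadDisc_re, hw₀.1]
    nlinarith [hw₀.2]
  have hcont : ContinuousAt
      (fun w ↦ √((‖quadDisc A c r w‖ - (quadDisc A c r w).re) / 2) / |w.im|) w₀ := by
    have := continuous_quadDisc (A := A) (c := c) (r := r)
    exact ContinuousAt.div (by fun_prop) (by fun_prop)
      (abs_ne_zero.mpr (im_ne_zero_of_mem_quadCut hr hw₀))
  convert hcont.tendsto using 3
  rw [hnorm]
  congr 1; ring

lemma tendsto_quadRatio_right (hr : 0 ≤ r) (hA : A ≠ 0) {w₀ : ℂ} (hw₀ : w₀ ∈ quadCut A c r) :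
    Tendsto (quadRatio A c r) (𝓝[{w | w₀.re < w.re ∧ w.im ≠ 0}] w₀)
      (𝓝 (√(-(quadDisc A c r w₀).re) / |w₀.im|)) := by
  refine tendsto_nhdsWithin_congr (fun w ⟨hre, him⟩ ↦ ?_)
    ((tendsto_sqrt_quadDisc_div_abs_im hr hw₀).mono_left nhdsWithin_le_nhds)
  rw [quadRatio_of_im_ne_zero him, Complex.cpow_half_im_div_of_mul_pos]
  rw [quadDisc_im_of_mem_quadCut hw₀, mul_assoc]
  exact mul_pos (mul_pos (by positivity) (sub_pos.mpr hre)) (mul_self_pos.mpr him)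

lemma tendsto_quadRatio_left (hr : 0 ≤ r) (hA : A ≠ 0) {w₀ : ℂ} (hw₀ : w₀ ∈ quadCut A c r) :
    Tendsto (quadRatio A c r) (𝓝[{w | w.re < w₀.re ∧ w.im ≠ 0}] w₀)
      (𝓝 (-(√(-(quadDisc A c r w₀).re) / |w₀.im|))) := by
  refine tendsto_nhdsWithin_congr (fun w ⟨hre, him⟩ ↦ ?_)
    ((tendsto_sqrt_quadDisc_div_abs_im hr hw₀).neg.mono_left nhdsWithin_le_nhds)
  rw [quadRatio_of_im_ne_zero him, Complex.cpow_half_im_div_of_mul_neg]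
  rw [quadDisc_im_of_mem_quadCut hw₀, mul_assoc]
  exact mul_neg_of_neg_of_pos (mul_neg_of_pos_of_neg (by positivity) (sub_neg.mpr hre))
    (mul_self_pos.mpr him)

end QuadDisc

lemma sqrt_div_abs_lt_abs_iff {s A y : ℝ} (hs : 0 ≤ s) (hA : A ≠ 0) :
    √s / |A| < |y| ↔ s < (A * y) ^ 2 := by
  rw [div_lt_iff₀ (abs_pos.mpr hA), ← abs_mul, mul_comm, ← Real.sqrt_sq_eq_abs,
    Real.sqrt_lt_sqrt_iff hs]

lemma quadCut_eq {a A : ℝ} (ha : a ∈ Ioo (0 : ℝ) 1) (hA : A ≠ 0) :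
    {w : ℂ | w.re = -(1 - 2 * a) / A ∧ 2 * √(a * (1 - a)) / |A| < |w.im|} =
      quadCut A (1 - 2 * a) (4 * a * (1 - a)) := by
  have hr : 0 ≤ 4 * a * (1 - a) := by nlinarith [ha.1, ha.2]
  have hsqrt : 2 * √(a * (1 - a)) = √(4 * a * (1 - a)) := by
    rw [mul_assoc 4, Real.sqrt_mul (by norm_num : (0 : ℝ) ≤ 4), show (4 : ℝ) = 2 ^ 2 by norm_num,
      Real.sqrt_sq zero_le_two]
  ext w
  simp only [quadCut, mem_ofPred_eq, hsqrt, sqrt_div_abs_lt_abs_iff hr hA, eq_div_iff hA]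
  constructor <;> rintro ⟨h1, h2⟩ <;> exact ⟨by linarith, h2⟩

theorem stmt3 (a α α' : ℝ) (ha : a ∈ Ioo (0 : ℝ) 1) (hαα : α ≠ α')
    (𝒜 : ℝ) (h𝒜 : 𝒜 = α' - α)
    (Dp : ℂ → ℂ)
    (hDp : ∀ w : ℂ, Dp w = ((𝒜 : ℂ) * w + ((1 - 2 * a : ℝ) : ℂ)) ^ 2 + ((4 * a * (1 - a) : ℝ) : ℂ))
    (Ip : Set ℂ)
    (hIp : Ip = {w : ℂ | w.re = -(1 - 2 * a) / 𝒜 ∧ 2 * Real.sqrt (a * (1 - a)) / |𝒜| < |w.im|})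
    (F : ℂ → ℝ)
    -- F(w) = Im(√(D_p(w)))/Im(w) off the real axis
    (hF : ∀ w : ℂ, w.im ≠ 0 → F w = ((Dp w) ^ ((1 : ℂ) / 2)).im / w.im)
    -- the continuous extension to ℝ
    (hFR : ∀ t : ℝ, F (t : ℂ) =
      𝒜 * (𝒜 * t + (1 - 2 * a)) / Real.sqrt ((𝒜 * t + (1 - 2 * a)) ^ 2 + 4 * a * (1 - a))) :
    -- the quotient identity
    (∀ w : ℂ, w.im ≠ 0 → w ∉ Ip →
      ((F w : ℝ) : ℂ) =
        ((Dp w) ^ ((1 : ℂ) / 2) - (Dp ((starRingEnd ℂ) w)) ^ ((1 : ℂ) / 2)) /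
          (w - (starRingEnd ℂ) w))
    -- continuity off I_p ∪ ℝ
    ∧ ContinuousOn F (Ip ∪ {w : ℂ | w.im = 0})ᶜ
    -- the extension is continuous off I_p
    ∧ ContinuousOn F Ipᶜ
    -- one-sided limits at I_p
    ∧ (∀ w₀ ∈ Ip,
        Tendsto F (nhdsWithin w₀ ({w : ℂ | w₀.re < w.re} ∩ (Ip ∪ {w : ℂ | w.im = 0})ᶜ))
          (nhds (Real.sqrt (-(Dp w₀).re) / |w₀.im|))
        ∧ Tendsto F (nhdsWithin w₀ ({w : ℂ | w.re < w₀.re} ∩ (Ip ∪ {w : ℂ | w.im = 0})ᶜ))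
          (nhds (-(Real.sqrt (-(Dp w₀).re) / |w₀.im|)))) := by
  have hA : 𝒜 ≠ 0 := h𝒜 ▸ sub_ne_zero.mpr hαα.symm
  have hr : 0 < 4 * a * (1 - a) := by nlinarith [ha.1, ha.2]
  obtain rfl : Dp = quadDisc 𝒜 (1 - 2 * a) (4 * a * (1 - a)) := funext hDp
  obtain rfl : Ip = quadCut 𝒜 (1 - 2 * a) (4 * a * (1 - a)) := hIp.trans (quadCut_eq ha hA)
  obtain rfl : F = quadRatio 𝒜 (1 - 2 * a) (4 * a * (1 - a)) := by
    funext w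
    by_cases him : w.im = 0
    · lift w to ℝ using him with t
      rw [hFR, quadRatio_ofReal]
    · rw [hF w him, quadRatio_of_im_ne_zero him]
  have off_axis {s T : Set ℂ} : s ∩ (T ∪ {w : ℂ | w.im = 0})ᶜ ⊆ s ∩ {w | w.im ≠ 0} :=
    fun w ⟨hs, hw⟩ ↦ ⟨hs, fun h ↦ hw (Or.inr h)⟩
  refine ⟨fun w him hw ↦ ofReal_quadRatio hr.le him hw,
    (continuousOn_quadRatio hr).mono (compl_subset_compl.mpr subset_union_left),
    continuousOn_quadRatio hr, fun w₀ hw₀ ↦ ⟨?_, ?_⟩⟩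
  · exact (tendsto_quadRatio_right hr.le hA hw₀).mono_left (nhdsWithin_mono _ off_axis)
  · exact (tendsto_quadRatio_left hr.le hA hw₀).mono_left (nhdsWithin_mono _ off_axis)
end

section
/- Define G_p(z) = a/(z − α) + (1−a)/(z − α') for z ∈ ℂ ∖ {α, α'}, and B_p(w) = (α+α')/2 + (1 + √(D_p(w)))/(2w) for w ∈ ℂ ∖ (I_p ∪ {0}). Then: (1) B_p is continuous on ℂ ∖ (I_p ∪ {0}) and analytic on ℂ ∖ (cl(I_p) ∪ {0}); (2) for every w ∈ ℂ ∖ (I_p ∪ {0}), B_p(w) ∉ {α, α'} and G_p(B_p(w)) = w; (3) there exists R > 0 such that for every z ∈ ℂ with |z| > R one has G_p(z) ∈ ℂ ∖ (I_p ∪ {0}) and B_p(G_p(z)) = z; (4) for w₀ ∈ I_p, the limit of B_p(w) as w → w₀ from the right equals (α+α')/2 + (1 + sgn(Im(w₀))·i·√(−D_p(w₀)))/(2w₀), and the limit from the left equals (α+α')/2 + (1 − sgn(Im(w₀))·i·√(−D_p(w₀)))/(2w₀); (5) |B_p(w)| → ∞ as w → 0 within ℂ ∖ (I_p ∪ {0}).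 -/
/-!
`B_p(w)` is the root `z` of `w (z - α) (z - α') = z - (a α' + (1 - a) α)`, i.e. of `G_p(z) = w`,
singled out by the principal square root of the discriminant `D_p(w)`. Writing
`D_p(w) = u² + 4a(1-a)` with `u = 𝒜w + 1 - 2a`, `D_p(w)` is a negative real exactly on `I_p`
and lies in the slit plane off `cl(I_p)`, which gives continuity and analyticity. At `w₀ ∈ I_p`,
`Im D_p(w) = 2𝒜²(Re w - Re w₀) Im w`, so the side from which `w` approaches `I_p` fixes the sign
of `Im D_p(w)` and hence the one-sided limit `±i√(-D_p(w₀))` of the square root. Near `z = ∞`,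
`G_p(z) → 0` and `2 G_p(z) (z - (α+α')/2) - 1 → 1`; that square root of `D_p(G_p(z))` therefore
has positive real part, so it is the principal one and `B_p(G_p(z)) = z`. Finally `w B_p(w) → 1`
as `w → 0`.
-/

open Set Filter Topology Bornology

namespace Complex

lemma cpow_inv_two_eq_of_pos_mul_im {z : ℂ} {r : ℝ} (h : 0 < r * z.im) :
    z ^ (2⁻¹ : ℂ) = √((‖z‖ + z.re) / 2) + Real.sign r * √((‖z‖ - z.re) / 2) * I := by
  apply Complex.ext
  · simp [cpow_inv_two_re]
  · rcases lt_trichotomy r 0 with hr | rfl | hr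
    · simp [cpow_inv_two_im_eq_neg_sqrt (neg_of_mul_pos_right h hr.le), Real.sign_of_neg hr]
    · simp at h
    · simp [cpow_inv_two_im_eq_sqrt (pos_of_mul_pos_right h hr.le).le, Real.sign_of_pos hr]

lemma _root_.Filter.Tendsto.cpow_inv_two_of_pos_mul_im {ι : Type*} {l : Filter ι} {f : ι → ℂ}
    {x r : ℝ} (hx : x ≤ 0) (hf : Tendsto f l (𝓝 x)) (him : ∀ᶠ i in l, 0 < r * (f i).im) :
    Tendsto (fun i => f i ^ (2⁻¹ : ℂ)) l (𝓝 (Real.sign r * √(-x) * I)) := by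
  have hg : Continuous fun z : ℂ =>
      (√((‖z‖ + z.re) / 2) : ℂ) + Real.sign r * √((‖z‖ - z.re) / 2) * I := by fun_prop
  have hgx : (√((‖(x : ℂ)‖ + x) / 2) : ℂ) + Real.sign r * √((‖(x : ℂ)‖ - x) / 2) * I
      = Real.sign r * √(-x) * I := by
    rw [norm_real, Real.norm_eq_abs, abs_of_nonpos hx, show (-x + x) / 2 = 0 by ring,
      show (-x - x) / 2 = -x by ring]
    simp
  refine (hgx ▸ (hg.tendsto _).comp hf).congr' ?_
  filter_upwards [him] with i hi
  exact (cpow_inv_two_eq_of_pos_mul_im hi).symm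

lemma sq_add_ofReal_im_eq_zero_and_re_neg_iff {c : ℝ} (hc : 0 < c) (u : ℂ) :
    (u ^ 2 + c).im = 0 ∧ (u ^ 2 + c).re < 0 ↔ u.re = 0 ∧ c < u.im ^ 2 := by
  simp only [add_im, add_re, ofReal_im, ofReal_re, sq, mul_re, mul_im, add_zero]
  constructor
  · rintro ⟨him, hre⟩
    have hre0 : u.re = 0 := by
      rcases mul_eq_zero.1 (show u.re * u.im = 0 by linarith) with h | h
      · exact h
      · nlinarith
    exact ⟨hre0, by nlinarith⟩
  · rintro ⟨hre0, him⟩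
    simp only [hre0, zero_mul, mul_zero, add_zero, true_and]
    linarith

lemma sq_add_ofReal_mem_slitPlane_iff {c : ℝ} (hc : 0 < c) (u : ℂ) :
    u ^ 2 + c ∈ slitPlane ↔ ¬(u.re = 0 ∧ c ≤ u.im ^ 2) := by
  rw [mem_slitPlane_iff, ← not_iff_not, not_not, not_or, not_lt, not_not]
  simp only [add_im, add_re, ofReal_im, ofReal_re, sq, mul_re, mul_im, add_zero]
  constructor
  · rintro ⟨hre, him⟩
    have hre0 : u.re = 0 := by
      rcases mul_eq_zero.1 (show u.re * u.im = 0 by linarith) with h | h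
      · exact h
      · nlinarith
    exact ⟨hre0, by nlinarith⟩
  · rintro ⟨hre0, him⟩
    simp only [hre0, zero_mul, mul_zero, add_zero, and_true]
    linarith

end Complex

namespace TwoAtom

open Complex

-- `cauchy`, `disc`, `cut` and `cauchyInv` are the paper's `G_p`, `D_p`, `I_p` and `B_p`.
noncomputable def cauchy (a α α' : ℝ) (z : ℂ) : ℂ :=
  (a : ℂ) / (z - (α : ℂ)) + ((1 - a : ℝ) : ℂ) / (z - (α' : ℂ))

noncomputable def disc (a A : ℝ) (w : ℂ) : ℂ :=
  ((A : ℂ) * w + ((1 - 2 * a : ℝ) : ℂ)) ^ 2 + ((4 * a * (1 - a) : ℝ) : ℂ)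

def cut (a A : ℝ) : Set ℂ :=
  {w : ℂ | w.re = -(1 - 2 * a) / A ∧ 2 * Real.sqrt (a * (1 - a)) / |A| < |w.im|}

noncomputable def cauchyInv (a α α' : ℝ) (w : ℂ) : ℂ :=
  (((α + α') / 2 : ℝ) : ℂ) + (1 + disc a (α' - α) w ^ ((1 : ℂ) / 2)) / (2 * w)

section Disc

variable {a A : ℝ} {w : ℂ}

lemma four_mul_mul_one_sub_pos (ha : a ∈ Ioo 0 1) : 0 < 4 * a * (1 - a) :=
  mul_pos (mul_pos four_pos ha.1) (sub_pos.2 ha.2)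

lemma mem_cut_iff (ha : a ∈ Ioo 0 1) (hA : A ≠ 0) :
    w ∈ cut a A ↔ A * w.re + (1 - 2 * a) = 0 ∧ 4 * a * (1 - a) < (A * w.im) ^ 2 := by
  have hsq : (2 * √(a * (1 - a))) ^ 2 = 4 * a * (1 - a) := by
    rw [mul_pow, Real.sq_sqrt (mul_pos ha.1 (sub_pos.2 ha.2)).le]; ring
  simp only [cut, mem_ofPred_eq]
  apply and_congr
  · rw [eq_div_iff hA]
    constructor <;> intro h <;> linarith
  · rw [div_lt_iff₀ (abs_pos.2 hA), ← abs_mul, ← hsq, ← sq_abs (A * w.im), mul_comm A,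
      pow_lt_pow_iff_left₀ (by positivity) (abs_nonneg _) two_ne_zero]

lemma disc_im_eq_zero_and_re_neg_iff (ha : a ∈ Ioo 0 1) (hA : A ≠ 0) :
    (disc a A w).im = 0 ∧ (disc a A w).re < 0 ↔ w ∈ cut a A := by
  rw [mem_cut_iff ha hA, disc,
    sq_add_ofReal_im_eq_zero_and_re_neg_iff (four_mul_mul_one_sub_pos ha)]
  simp

lemma mem_closure_cut (ha : a ∈ Ioo 0 1) (hA : A ≠ 0) (hre : A * w.re + (1 - 2 * a) = 0)
    (him : 4 * a * (1 - a) ≤ (A * w.im) ^ 2) : w ∈ closure (cut a A) := by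
  have hc := four_mul_mul_one_sub_pos ha
  have hpos : 0 < (A * w.im) ^ 2 := hc.trans_le him
  -- for `t > 0`, scaling `im w` by `1 + t` moves `w` strictly into the cut
  refine mem_closure_of_tendsto (f := fun t : ℝ => w + (t * w.im : ℝ) * I) (b := 𝓝[>] 0) ?_ ?_
  · exact ((by fun_prop : Continuous fun t : ℝ => w + (t * w.im : ℝ) * I).tendsto' 0 w
      (by simp)).mono_left nhdsWithin_le_nhds
  · filter_upwards [self_mem_nhdsWithin] with t (ht : 0 < t)
    rw [mem_cut_iff ha hA]
    simp only [add_re, add_im, ofReal_re, ofReal_im, mul_re, mul_im, I_re, I_im]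
    refine ⟨by simpa using hre, ?_⟩
    nlinarith [mul_pos ht hpos]

lemma disc_mem_slitPlane (ha : a ∈ Ioo 0 1) (hA : A ≠ 0) (hw : w ∉ closure (cut a A)) :
    disc a A w ∈ slitPlane := by
  rw [disc, sq_add_ofReal_mem_slitPlane_iff (four_mul_mul_one_sub_pos ha)]
  rintro ⟨hre, him⟩
  exact hw (mem_closure_cut ha hA (by simpa using hre) (by simpa using him))

lemma disc_im_eq {w₀ : ℂ} (h : A * w₀.re + (1 - 2 * a) = 0) (w : ℂ) :
    (disc a A w).im = 2 * A ^ 2 * (w.re - w₀.re) * w.im := by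
  simp only [disc, sq, add_re, add_im, mul_re, mul_im, ofReal_re, ofReal_im]
  linear_combination (2 * A * w.im) * h

@[simp]
lemma disc_zero : disc a A 0 = 1 := by
  simp only [disc]
  push_cast
  ring

lemma continuous_disc : Continuous (disc a A) := by
  unfold disc
  fun_prop

lemma analyticAt_disc : AnalyticAt ℂ (disc a A) w := by
  unfold disc
  fun_prop

lemma compl_cut_mem_nhds_zero (ha : a ∈ Ioo 0 1) (hA : A ≠ 0) : (cut a A)ᶜ ∈ 𝓝 0 := by
  have hr : 0 < 2 * √(a * (1 - a)) / |A| := by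
    have := Real.sqrt_pos.2 (mul_pos ha.1 (sub_pos.2 ha.2))
    positivity
  filter_upwards [Metric.ball_mem_nhds 0 hr] with w hw hwc
  rw [mem_ball_zero_iff] at hw
  linarith [abs_im_le_norm w, hwc.2]

end Disc

section Inverse

variable {a α α' : ℝ}

lemma cauchy_mul_sub_mul_sub {z : ℂ} (hα : z ≠ α) (hα' : z ≠ α') :
    cauchy a α α' z * (z - α) * (z - α') = z - (a * α' + (1 - a) * α) := by
  rw [cauchy]
  field_simp [sub_ne_zero.2 hα, sub_ne_zero.2 hα']
  push_cast
  ring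

variable (a α α') in
lemma disc_sub_sq (w z : ℂ) :
    disc a (α' - α) w - (2 * w * (z - ((α + α') / 2 : ℝ)) - 1) ^ 2
      = 4 * w * (z - (a * α' + (1 - a) * α) - w * (z - α) * (z - α')) := by
  simp only [disc]
  push_cast
  ring

lemma cauchy_eq_of_mul_sub_mul_sub_eq (ha : a ∈ Ioo 0 1) (hαα : α ≠ α') {w z : ℂ}
    (h : w * (z - α) * (z - α') = z - (a * α' + (1 - a) * α)) :
    z ≠ α ∧ z ≠ α' ∧ cauchy a α α' z = w := by
  have hαα' : (α' : ℂ) - α ≠ 0 := sub_ne_zero.2 (by exact_mod_cast hαα.symm)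
  have hα : z ≠ α := by
    rintro rfl
    have : (a : ℂ) * (α' - α) = 0 := by linear_combination h
    exact (mul_ne_zero (ofReal_ne_zero.2 ha.1.ne') hαα') this
  have hα' : z ≠ α' := by
    rintro rfl
    have : ((1 - a : ℝ) : ℂ) * (α' - α) = 0 := by push_cast; linear_combination -h
    exact (mul_ne_zero (ofReal_ne_zero.2 (sub_pos.2 ha.2).ne') hαα') this
  refine ⟨hα, hα', ?_⟩
  have hG := cauchy_mul_sub_mul_sub (a := a) hα hα'
  rw [← h] at hG
  exact mul_right_cancel₀ (sub_ne_zero.2 hα) (mul_right_cancel₀ (sub_ne_zero.2 hα') hG)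

lemma mul_sub_mul_sub_cauchyInv {w : ℂ} (hw : w ≠ 0) :
    w * (cauchyInv a α α' w - α) * (cauchyInv a α α' w - α')
      = cauchyInv a α α' w - (a * α' + (1 - a) * α) := by
  have hroot : 2 * w * (cauchyInv a α α' w - ((α + α') / 2 : ℝ)) - 1
      = disc a (α' - α) w ^ ((1 : ℂ) / 2) := by
    rw [cauchyInv]
    field_simp
    ring
  have h := disc_sub_sq a α α' w (cauchyInv a α α' w)
  rw [hroot, one_div, cpow_ofNat_inv_pow, sub_self, eq_comm, mul_eq_zero, sub_eq_zero] at h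
  exact (h.resolve_left (mul_ne_zero (by norm_num) hw)).symm

lemma cauchyInv_eq_of_mul_sub_mul_sub_eq {w z : ℂ} (hw : w ≠ 0)
    (h : w * (z - α) * (z - α') = z - (a * α' + (1 - a) * α))
    (hre : 0 < (2 * w * (z - ((α + α') / 2 : ℝ)) - 1).re) : cauchyInv a α α' w = z := by
  set v := 2 * w * (z - ((α + α') / 2 : ℝ)) - 1
  have hsq : (disc a (α' - α) w ^ (2⁻¹ : ℂ)) ^ 2 = v ^ 2 := by
    have := disc_sub_sq a α α' w z
    rw [h, sub_self, mul_zero, sub_eq_zero] at this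
    rw [cpow_ofNat_inv_pow, this]
  -- the principal square root lies in the closed right half-plane
  have hroot : disc a (α' - α) w ^ (2⁻¹ : ℂ) = v := by
    refine (sq_eq_sq_iff_eq_or_eq_neg.1 hsq).resolve_right fun hneg => ?_
    have := cpow_inv_two_re (disc a (α' - α) w)
    rw [hneg, neg_re] at this
    linarith [Real.sqrt_nonneg ((‖disc a (α' - α) w‖ + (disc a (α' - α) w).re) / 2)]
  rw [cauchyInv, one_div, hroot]
  field_simp
  ring

end Inverse

section Infinity

variable {a α α' : ℝ}

lemma tendsto_sub_div_sub_cobounded (c d : ℂ) :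
    Tendsto (fun z => (z - c) / (z - d)) (cobounded ℂ) (𝓝 1) := by
  have h : Tendsto (fun z => 1 + (d - c) * (z - d)⁻¹) (cobounded ℂ) (𝓝 1) := by
    simpa using tendsto_const_nhds.add
      (tendsto_const_nhds.mul (tendsto_inv₀_cobounded.comp (tendsto_sub_const_cobounded d)))
  refine h.congr' ?_
  filter_upwards [eventually_ne_cobounded d] with z hz
  field_simp [sub_ne_zero.2 hz]
  ring

variable (a α α') in
lemma tendsto_cauchy_cobounded : Tendsto (cauchy a α α') (cobounded ℂ) (𝓝 0) := by
  unfold cauchy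
  simp only [div_eq_mul_inv]
  simpa using
    (tendsto_const_nhds.mul (tendsto_inv₀_cobounded.comp (tendsto_sub_const_cobounded (α : ℂ)))).add
      (tendsto_const_nhds.mul (tendsto_inv₀_cobounded.comp (tendsto_sub_const_cobounded (α' : ℂ))))

variable (a α α') in
lemma tendsto_cauchy_mul_sub_cobounded (c : ℂ) :
    Tendsto (fun z => cauchy a α α' z * (z - c)) (cobounded ℂ) (𝓝 1) := by
  have h := ((tendsto_const_nhds (x := (a : ℂ))).mul (tendsto_sub_div_sub_cobounded c α)).add
    ((tendsto_const_nhds (x := ((1 - a : ℝ) : ℂ))).mul (tendsto_sub_div_sub_cobounded c α'))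
  convert h using 1
  · ext z
    simp only [cauchy]
    ring
  · simp

lemma eventually_cauchyInv_cauchy_cobounded (ha : a ∈ Ioo 0 1) (hαα : α ≠ α') :
    ∀ᶠ z in cobounded ℂ, cauchy a α α' z ∉ cut a (α' - α) ∧ cauchy a α α' z ≠ 0 ∧
      cauchyInv a α α' (cauchy a α α' z) = z := by
  have hre : ∀ᶠ z in cobounded ℂ,
      0 < (2 * cauchy a α α' z * (z - ((α + α') / 2 : ℝ)) - 1).re := by
    have h :=
      ((tendsto_cauchy_mul_sub_cobounded a α α' (((α + α') / 2 : ℝ) : ℂ)).const_mul 2).sub_const 1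
    simp only [← mul_assoc] at h
    exact ((continuous_re.tendsto _).comp h).eventually (lt_mem_nhds (by norm_num))
  filter_upwards [(tendsto_cauchy_cobounded a α α').eventually
      (compl_cut_mem_nhds_zero ha (sub_ne_zero.2 hαα.symm)), hre,
    eventually_ne_cobounded (α : ℂ), eventually_ne_cobounded (α' : ℂ),
    eventually_ne_cobounded (a * α' + (1 - a) * α : ℂ)] with z hcut hre hα hα' hβ
  have hG := cauchy_mul_sub_mul_sub (a := a) hα hα'
  have hG0 : cauchy a α α' z ≠ 0 := by
    intro h0
    rw [h0, zero_mul, zero_mul, eq_comm, sub_eq_zero] at hG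
    exact hβ hG
  exact ⟨hcut, hG0, cauchyInv_eq_of_mul_sub_mul_sub_eq hG0 hG hre⟩

end Infinity

section Regularity

variable {a α α' : ℝ} {w : ℂ}

lemma continuousAt_cauchyInv (ha : a ∈ Ioo 0 1) (hαα : α ≠ α') (hw : w ∉ cut a (α' - α))
    (hw0 : w ≠ 0) : ContinuousAt (cauchyInv a α α') w := by
  rw [← disc_im_eq_zero_and_re_neg_iff ha (sub_ne_zero.2 hαα.symm)] at hw
  have hD : 0 ≤ (disc a (α' - α) w).re ∨ (disc a (α' - α) w).im ≠ 0 := by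
    by_contra! h
    exact hw ⟨h.2, h.1⟩
  have hroot := (continuousAt_cpow_const_of_re_pos hD (by norm_num : 0 < ((1 : ℂ) / 2).re)).comp
    continuous_disc.continuousAt
  exact continuousAt_const.add ((continuousAt_const.add hroot).div (by fun_prop) (by simpa))

lemma analyticAt_cauchyInv (ha : a ∈ Ioo 0 1) (hαα : α ≠ α')
    (hw : w ∉ closure (cut a (α' - α))) (hw0 : w ≠ 0) : AnalyticAt ℂ (cauchyInv a α α') w :=
  analyticAt_const.add ((analyticAt_const.add (analyticAt_disc.cpow analyticAt_const
    (disc_mem_slitPlane ha (sub_ne_zero.2 hαα.symm) hw))).div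
      (analyticAt_const.mul analyticAt_id) (by simpa))

lemma tendsto_cauchyInv_of_mem_cut (ha : a ∈ Ioo 0 1) (hαα : α ≠ α') {w₀ : ℂ}
    (hw₀ : w₀ ∈ cut a (α' - α)) {r : ℝ} {S : Set ℂ}
    (hS : ∀ᶠ w in 𝓝[S] w₀, 0 < r * (w.re - w₀.re)) :
    Tendsto (cauchyInv a α α') (𝓝[S] w₀) (𝓝 ((((α + α') / 2 : ℝ) : ℂ) +
      (1 + ((Real.sign (r * w₀.im) : ℝ) : ℂ) * I * (√(-(disc a (α' - α) w₀).re) : ℝ)) /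
        (2 * w₀))) := by
  have hA : α' - α ≠ 0 := sub_ne_zero.2 hαα.symm
  obtain ⟨hre₀, him₀⟩ := (mem_cut_iff ha hA).1 hw₀
  obtain ⟨hDim, hDre⟩ := (disc_im_eq_zero_and_re_neg_iff ha hA).2 hw₀
  have hw₀im : w₀.im ≠ 0 := by
    rintro h
    rw [h, mul_zero, sq, mul_zero] at him₀
    exact him₀.not_gt (four_mul_mul_one_sub_pos ha)
  have hD : Tendsto (disc a (α' - α)) (𝓝[S] w₀) (𝓝 ((disc a (α' - α) w₀).re : ℂ)) := by
    rw [show ((disc a (α' - α) w₀).re : ℂ) = disc a (α' - α) w₀ from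
      Complex.ext (by simp) (by simp [hDim])]
    exact continuous_disc.continuousAt.tendsto.mono_left nhdsWithin_le_nhds
  have hsign : ∀ᶠ w in 𝓝[S] w₀, 0 < r * w₀.im * (disc a (α' - α) w).im := by
    have hnear : ∀ᶠ w in 𝓝 w₀, 0 < w₀.im * w.im :=
      continuousAt_const.eventually_lt (continuousAt_const.mul continuous_im.continuousAt)
        (mul_self_pos.2 hw₀im)
    filter_upwards [hS, nhdsWithin_le_nhds hnear] with w h₁ h₂
    rw [disc_im_eq hre₀]
    have hA2 : 0 < (α' - α) ^ 2 := by positivity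
    nlinarith [mul_pos (mul_pos hA2 h₁) h₂]
  have hroot := hD.cpow_inv_two_of_pos_mul_im hDre.le hsign
  have h2w : (2 * w₀ : ℂ) ≠ 0 := mul_ne_zero two_ne_zero fun h => hw₀im (by simp [h])
  unfold cauchyInv
  rw [one_div, mul_right_comm _ I]
  exact tendsto_const_nhds.add ((tendsto_const_nhds.add hroot).div
    ((continuous_const.mul continuous_id).continuousAt.tendsto.mono_left nhdsWithin_le_nhds) h2w)

variable (a α α') in
lemma tendsto_norm_cauchyInv_nhdsNE_zero :
    Tendsto (fun w => ‖cauchyInv a α α' w‖) (𝓝[≠] 0) atTop := by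
  have hroot : ContinuousAt (fun w => disc a (α' - α) w ^ ((1 : ℂ) / 2)) 0 :=
    (continuousAt_cpow_const_of_re_pos (by simp) (by norm_num)).comp continuous_disc.continuousAt
  have hmul : Tendsto (fun w => cauchyInv a α α' w * w) (𝓝[≠] 0) (𝓝 1) := by
    have h : ContinuousAt
        (fun w => (((α + α') / 2 : ℝ) : ℂ) * w + (1 + disc a (α' - α) w ^ ((1 : ℂ) / 2)) / 2) 0 :=
      (continuousAt_const.mul continuousAt_id).add ((continuousAt_const.add hroot).div_const 2)
    have h1 := h.tendsto
    simp only [mul_zero, zero_add, disc_zero, one_cpow] at h1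
    norm_num at h1
    refine (h1.mono_left nhdsWithin_le_nhds).congr' ?_
    filter_upwards [self_mem_nhdsWithin] with w (hw : w ≠ 0)
    rw [cauchyInv]
    field_simp
    push_cast
    ring
  refine (((continuous_norm.tendsto _).comp hmul).pos_mul_atTop (by simp)
    tendsto_norm_inv_nhdsNE_zero_atTop).congr' ?_
  filter_upwards [self_mem_nhdsWithin] with w (hw : w ≠ 0)
  simp [hw]

end Regularity

end TwoAtom

open TwoAtom

theorem stmt5 (a α α' : ℝ) (ha : a ∈ Ioo (0 : ℝ) 1) (hαα : α ≠ α')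
    (𝒜 : ℝ) (h𝒜 : 𝒜 = α' - α)
    (Dp : ℂ → ℂ)
    (hDp : ∀ w : ℂ, Dp w = ((𝒜 : ℂ) * w + ((1 - 2 * a : ℝ) : ℂ)) ^ 2 + ((4 * a * (1 - a) : ℝ) : ℂ))
    (Ip : Set ℂ)
    (hIp : Ip = {w : ℂ | w.re = -(1 - 2 * a) / 𝒜 ∧ 2 * Real.sqrt (a * (1 - a)) / |𝒜| < |w.im|})
    (Gp : ℂ → ℂ)
    (hGp : ∀ z : ℂ, Gp z = (a : ℂ) / (z - (α : ℂ)) + ((1 - a : ℝ) : ℂ) / (z - (α' : ℂ)))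
    (Bp : ℂ → ℂ)
    (hBp : ∀ w : ℂ, Bp w = (((α + α') / 2 : ℝ) : ℂ) + (1 + (Dp w) ^ ((1 : ℂ) / 2)) / (2 * w)) :
    -- (1) continuity and analyticity
    ContinuousOn Bp (Ip ∪ {0})ᶜ
    ∧ AnalyticOnNhd ℂ Bp (closure Ip ∪ {0})ᶜ
    -- (2) B_p is a right inverse of G_p
    ∧ (∀ w : ℂ, w ∉ Ip → w ≠ 0 → Bp w ≠ (α : ℂ) ∧ Bp w ≠ (α' : ℂ) ∧ Gp (Bp w) = w)
    -- (3) B_p inverts G_p near infinity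
    ∧ (∃ R : ℝ, 0 < R ∧ ∀ z : ℂ, R < ‖z‖ →
        Gp z ∉ Ip ∧ Gp z ≠ 0 ∧ Bp (Gp z) = z)
    -- (4) one-sided limits at I_p
    ∧ (∀ w₀ ∈ Ip,
        Tendsto Bp (nhdsWithin w₀ ({w : ℂ | w₀.re < w.re} ∩ (Ip ∪ {0})ᶜ))
          (nhds ((((α + α') / 2 : ℝ) : ℂ) +
            (1 + ((Real.sign w₀.im : ℝ) : ℂ) * Complex.I * (Real.sqrt (-(Dp w₀).re) : ℝ)) / (2 * w₀)))
        ∧ Tendsto Bp (nhdsWithin w₀ ({w : ℂ | w.re < w₀.re} ∩ (Ip ∪ {0})ᶜ))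
          (nhds ((((α + α') / 2 : ℝ) : ℂ) +
            (1 - ((Real.sign w₀.im : ℝ) : ℂ) * Complex.I * (Real.sqrt (-(Dp w₀).re) : ℝ)) / (2 * w₀))))
    -- (5) |B_p(w)| → ∞ as w → 0
    ∧ Tendsto (fun w => ‖Bp w‖) (nhdsWithin 0 (Ip ∪ {0})ᶜ) atTop := by
  subst h𝒜
  obtain rfl : Dp = disc a (α' - α) := funext hDp
  obtain rfl : Ip = cut a (α' - α) := hIp
  obtain rfl : Gp = cauchy a α α' := funext hGp
  obtain rfl : Bp = cauchyInv a α α' := funext hBp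
  have hcompl : ∀ {s : Set ℂ} {w : ℂ}, w ∈ (s ∪ {0})ᶜ → w ∉ s ∧ w ≠ 0 := fun hw => not_or.1 hw
  refine ⟨fun w hw => ?_, fun w hw => ?_, fun w _ hw0 => ?_, ?_, fun w₀ hw₀ => ⟨?_, ?_⟩, ?_⟩
  · exact (continuousAt_cauchyInv ha hαα (hcompl hw).1 (hcompl hw).2).continuousWithinAt
  · exact analyticAt_cauchyInv ha hαα (hcompl hw).1 (hcompl hw).2
  · exact cauchy_eq_of_mul_sub_mul_sub_eq ha hαα (mul_sub_mul_sub_cauchyInv hw0)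
  · have h := eventually_cauchyInv_cauchy_cobounded ha hαα
    rw [← comap_norm_atTop, (atTop_basis.comap _).eventually_iff] at h
    obtain ⟨R, -, hR⟩ := h
    exact ⟨max R 1, by positivity, fun z hz => hR ((le_max_left R 1).trans hz.le)⟩
  · have h := tendsto_cauchyInv_of_mem_cut ha hαα hw₀ (r := 1)
      (S := {w | w₀.re < w.re} ∩ (cut a (α' - α) ∪ {0})ᶜ)
      (eventually_nhdsWithin_of_forall fun w hw => by simpa using hw.1)
    rwa [one_mul] at h
  · have h := tendsto_cauchyInv_of_mem_cut ha hαα hw₀ (r := -1)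
      (S := {w | w.re < w₀.re} ∩ (cut a (α' - α) ∪ {0})ᶜ)
      (eventually_nhdsWithin_of_forall fun w hw => by simpa using hw.1)
    rwa [neg_one_mul, Real.sign_neg, Complex.ofReal_neg, neg_mul, neg_mul, ← sub_eq_add_neg] at h
  · exact (tendsto_norm_cauchyInv_nhdsNE_zero a α α').mono_left
      (nhdsWithin_mono _ (compl_subset_compl.2 subset_union_right))
end

section
/- Define T_p : ℂ ∖ I_p → ℝ by T_p(w) = Im(conj(w)·√(D_p(w)))/Im(w) for w ∉ ℝ and T_p(t) = (−(1−2a)𝒜t − 1)/√(D_p(t)) for t ∈ ℝ, and define T_q : ℂ ∖ I_q → ℝ analogously with b, 𝓑, D_q in place of a, 𝒜, D_p. Then: (1) T_p(g) + T_q(h) → −2 as (g,h) → (0,0) within (ℂ ∖ I_p) × (ℂ ∖ I_q); (2) consequently, the function l(g,h) = (T_p(g) + T_q(h))/(2|g|²) tends to −∞ as (g,h) → (0,0) within {(g,h) ∈ (ℂ ∖ I_p) × (ℂ ∖ I_q) : g ≠ 0}. -/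
open Set Filter Topology ComplexConjugate

/-!
Write `s w` for the principal square root of `D w = (A w + c)² + d`, where `c² + d = 1`, so that
`s 0 = 1`. Comparing imaginary parts in `s w ² = D w` gives
`Im (s w) · Re (s w) = A · Im w · (A · Re w + c)`, which turns the quotient `Im (w̄ · s w) / Im w`
into `-Re (s w) + Re w · A · (A · Re w + c) / Re (s w)`. The real-axis formula agrees with this
expression as well, so near `0` both branches of `T` coincide with one function that is
continuous at `0` with value `-1`. Hence `T_p(g) + T_q(h) → -2`, and dividing by `2|g|² → 0⁺`
sends the quotient to `-∞`.
-/

section SqrtQuadratic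

variable {A c d : ℝ}

theorem im_conj_mul_div_im_of_sq_eq {w s : ℂ} (hw : w.im ≠ 0) (hs : s.re ≠ 0)
    (hsq : s ^ 2 = ((A : ℂ) * w + c) ^ 2 + d) :
    (conj w * s).im / w.im = -s.re + w.re * A * (A * w.re + c) / s.re := by
  have him : s.re * s.im = (A * w.re + c) * (A * w.im) := by
    have := congrArg Complex.im hsq
    simp only [sq, Complex.mul_im, Complex.add_im, Complex.add_re, Complex.mul_re,
      Complex.ofReal_re, Complex.ofReal_im] at this
    linarith
  have hs_im : s.im = A * w.im * (A * w.re + c) / s.re := by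
    field_simp
    linarith
  rw [Complex.mul_im, Complex.conj_re, Complex.conj_im, hs_im]
  field_simp
  ring

theorem div_sqrt_eq_neg_sqrt_add (hd : 0 < d) (hcd : c ^ 2 + d = 1) (t : ℝ) :
    (-c * A * t - 1) / √((A * t + c) ^ 2 + d) =
      -√((A * t + c) ^ 2 + d) + t * A * (A * t + c) / √((A * t + c) ^ 2 + d) := by
  have hpos : 0 < (A * t + c) ^ 2 + d := by positivity
  have hsqrt := Real.sq_sqrt hpos.le
  field_simp [(Real.sqrt_pos.2 hpos).ne']
  nlinarith [hsqrt]

theorem tendsto_cpow_one_div_two_quadratic (hcd : c ^ 2 + d = 1) :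
    Tendsto (fun w : ℂ => (((A : ℂ) * w + c) ^ 2 + d) ^ ((1 : ℂ) / 2)) (𝓝 0) (𝓝 1) := by
  have hD0 : ((A : ℂ) * 0 + c) ^ 2 + d = 1 := by
    rw [mul_zero, zero_add]
    exact_mod_cast hcd
  have hcont : ContinuousAt (fun w : ℂ => (((A : ℂ) * w + c) ^ 2 + d) ^ ((1 : ℂ) / 2)) 0 := by
    refine ContinuousAt.cpow (by fun_prop) continuousAt_const ?_
    rw [hD0]
    exact Complex.one_mem_slitPlane
  convert hcont.tendsto using 2
  simp only [hD0, Complex.one_cpow]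

theorem tendsto_neg_one_of_im_conj_mul_sqrt (hd : 0 < d) (hcd : c ^ 2 + d = 1)
    {D : ℂ → ℂ} (hD : ∀ w, D w = ((A : ℂ) * w + c) ^ 2 + d) {T : ℂ → ℝ}
    (hT : ∀ w : ℂ, w.im ≠ 0 → T w = (conj w * D w ^ ((1 : ℂ) / 2)).im / w.im)
    (hTR : ∀ t : ℝ, T t = (-c * A * t - 1) / √((A * t + c) ^ 2 + d)) :
    Tendsto T (𝓝 0) (𝓝 (-1)) := by
  set s : ℂ → ℂ := fun w => D w ^ ((1 : ℂ) / 2) with hs_def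
  have hs : Tendsto s (𝓝 0) (𝓝 1) := by
    simpa only [hs_def, hD] using tendsto_cpow_one_div_two_quadratic hcd
  have hre : Tendsto (fun w => (s w).re) (𝓝 0) (𝓝 1) :=
    (Complex.continuous_re.tendsto 1).comp hs
  have hF : Tendsto (fun w => -(s w).re + w.re * A * (A * w.re + c) / (s w).re) (𝓝 0)
      (𝓝 (-1)) := by
    have hnum : Tendsto (fun w : ℂ => w.re * A * (A * w.re + c)) (𝓝 0) (𝓝 0) :=
      (by fun_prop : Continuous fun w : ℂ => w.re * A * (A * w.re + c)).tendsto' 0 0 (by simp)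
    simpa using hre.neg.add (hnum.div hre one_ne_zero)
  refine hF.congr' ?_
  filter_upwards [hre.eventually (lt_mem_nhds one_pos)] with w hw
  by_cases him : w.im = 0
  · obtain ⟨t, rfl⟩ : ∃ t : ℝ, w = t := ⟨w.re, Complex.ext rfl (by simpa using him)⟩
    have hpos : 0 < (A * t + c) ^ 2 + d := by positivity
    have hst : s t = (√((A * t + c) ^ 2 + d) : ℂ) := by
      rw [show s t = D t ^ ((1 : ℂ) / 2) from rfl, hD, Real.sqrt_eq_rpow,
        Complex.ofReal_cpow hpos.le]
      norm_num
    rw [hTR, div_sqrt_eq_neg_sqrt_add hd hcd, hst, Complex.ofReal_re, Complex.ofReal_re]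
  · rw [hT w him, im_conj_mul_div_im_of_sq_eq him hw.ne' (by rw [← hD]; simp [hs_def, one_div])]

end SqrtQuadratic

theorem tendsto_two_mul_norm_sq_nhdsGT {E : Type*} [NormedAddCommGroup E] :
    Tendsto (fun z : E => 2 * ‖z‖ ^ 2) (𝓝[≠] 0) (𝓝[>] 0) := by
  refine tendsto_nhdsWithin_of_tendsto_nhds_of_eventually_within _ ?_ ?_
  · exact ((by fun_prop : Continuous fun z : E => 2 * ‖z‖ ^ 2).tendsto' 0 0 (by simp)).mono_left
      nhdsWithin_le_nhds
  · filter_upwards [self_mem_nhdsWithin] with z hz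
    exact mul_pos two_pos (pow_pos (norm_pos_iff.2 hz) 2)

theorem stmt8_general (a b : ℝ)
    (ha : a ∈ Ioo (0 : ℝ) 1) (hb : b ∈ Ioo (0 : ℝ) 1)
    (𝒜 ℬ : ℝ)
    (Dp Dq : ℂ → ℂ)
    (hDp : ∀ w : ℂ, Dp w = ((𝒜 : ℂ) * w + ((1 - 2 * a : ℝ) : ℂ)) ^ 2 + ((4 * a * (1 - a) : ℝ) : ℂ))
    (hDq : ∀ w : ℂ, Dq w = ((ℬ : ℂ) * w + ((1 - 2 * b : ℝ) : ℂ)) ^ 2 + ((4 * b * (1 - b) : ℝ) : ℂ))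
    (Ip Iq : Set ℂ)
    (Tp Tq : ℂ → ℝ)
    (hTp : ∀ w : ℂ, w.im ≠ 0 → Tp w = ((starRingEnd ℂ) w * (Dp w) ^ ((1 : ℂ) / 2)).im / w.im)
    (hTpR : ∀ t : ℝ, Tp (t : ℂ) =
      (-(1 - 2 * a) * 𝒜 * t - 1) / Real.sqrt ((𝒜 * t + (1 - 2 * a)) ^ 2 + 4 * a * (1 - a)))
    (hTq : ∀ w : ℂ, w.im ≠ 0 → Tq w = ((starRingEnd ℂ) w * (Dq w) ^ ((1 : ℂ) / 2)).im / w.im)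
    (hTqR : ∀ t : ℝ, Tq (t : ℂ) =
      (-(1 - 2 * b) * ℬ * t - 1) / Real.sqrt ((ℬ * t + (1 - 2 * b)) ^ 2 + 4 * b * (1 - b))) :
    -- (1) T_p(g) + T_q(h) → −2 as (g,h) → (0,0)
    Tendsto (fun p : ℂ × ℂ => Tp p.1 + Tq p.2)
      (nhdsWithin (0, 0) (Ipᶜ ×ˢ Iqᶜ)) (nhds (-2))
    -- (2) l(g,h) → −∞ as (g,h) → (0,0)
    ∧ Tendsto (fun p : ℂ × ℂ => (Tp p.1 + Tq p.2) / (2 * ‖p.1‖ ^ 2))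
      (nhdsWithin (0, 0) {p : ℂ × ℂ | p.1 ∉ Ip ∧ p.2 ∉ Iq ∧ p.1 ≠ 0}) atBot := by
  have hP : Tendsto Tp (𝓝 0) (𝓝 (-1)) :=
    tendsto_neg_one_of_im_conj_mul_sqrt (by nlinarith [ha.1, ha.2]) (by ring) hDp hTp hTpR
  have hQ : Tendsto Tq (𝓝 0) (𝓝 (-1)) :=
    tendsto_neg_one_of_im_conj_mul_sqrt (by nlinarith [hb.1, hb.2]) (by ring) hDq hTq hTqR
  have hsum : Tendsto (fun p : ℂ × ℂ => Tp p.1 + Tq p.2) (𝓝 (0, 0)) (𝓝 (-2)) := by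
    have h := (hP.comp (continuous_fst.tendsto (0, 0))).add
      (hQ.comp (continuous_snd.tendsto (0, 0)))
    rwa [show (-1 : ℝ) + -1 = -2 by norm_num] at h
  refine ⟨hsum.mono_left nhdsWithin_le_nhds, ?_⟩
  have hg : Tendsto Prod.fst (𝓝[{p : ℂ × ℂ | p.1 ∉ Ip ∧ p.2 ∉ Iq ∧ p.1 ≠ 0}] (0, 0))
      (𝓝[≠] 0) :=
    tendsto_nhdsWithin_of_tendsto_nhds_of_eventually_within _
      (continuousAt_fst.mono_left nhdsWithin_le_nhds)
      (eventually_nhdsWithin_of_forall fun p hp => hp.2.2)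
  simpa only [div_eq_mul_inv, Pi.inv_apply, Function.comp_def] using
    (hsum.mono_left nhdsWithin_le_nhds).neg_mul_atTop (by norm_num)
      (tendsto_two_mul_norm_sq_nhdsGT.comp hg).inv_tendsto_nhdsGT_zero

theorem stmt8 (a b α α' β β' : ℝ)
    (ha : a ∈ Ioo (0 : ℝ) 1) (hb : b ∈ Ioo (0 : ℝ) 1) (hαα : α ≠ α') (hββ : β ≠ β')
    (𝒜 ℬ : ℝ) (h𝒜 : 𝒜 = α' - α) (hℬ : ℬ = β' - β)
    (Dp Dq : ℂ → ℂ)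
    (hDp : ∀ w : ℂ, Dp w = ((𝒜 : ℂ) * w + ((1 - 2 * a : ℝ) : ℂ)) ^ 2 + ((4 * a * (1 - a) : ℝ) : ℂ))
    (hDq : ∀ w : ℂ, Dq w = ((ℬ : ℂ) * w + ((1 - 2 * b : ℝ) : ℂ)) ^ 2 + ((4 * b * (1 - b) : ℝ) : ℂ))
    (Ip Iq : Set ℂ)
    (hIp : Ip = {w : ℂ | w.re = -(1 - 2 * a) / 𝒜 ∧ 2 * Real.sqrt (a * (1 - a)) / |𝒜| < |w.im|})
    (hIq : Iq = {w : ℂ | w.re = -(1 - 2 * b) / ℬ ∧ 2 * Real.sqrt (b * (1 - b)) / |ℬ| < |w.im|})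
    (Tp Tq : ℂ → ℝ)
    (hTp : ∀ w : ℂ, w.im ≠ 0 → Tp w = ((starRingEnd ℂ) w * (Dp w) ^ ((1 : ℂ) / 2)).im / w.im)
    (hTpR : ∀ t : ℝ, Tp (t : ℂ) =
      (-(1 - 2 * a) * 𝒜 * t - 1) / Real.sqrt ((𝒜 * t + (1 - 2 * a)) ^ 2 + 4 * a * (1 - a)))
    (hTq : ∀ w : ℂ, w.im ≠ 0 → Tq w = ((starRingEnd ℂ) w * (Dq w) ^ ((1 : ℂ) / 2)).im / w.im)
    (hTqR : ∀ t : ℝ, Tq (t : ℂ) =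
      (-(1 - 2 * b) * ℬ * t - 1) / Real.sqrt ((ℬ * t + (1 - 2 * b)) ^ 2 + 4 * b * (1 - b))) :
    -- (1) T_p(g) + T_q(h) → −2 as (g,h) → (0,0)
    Tendsto (fun p : ℂ × ℂ => Tp p.1 + Tq p.2)
      (nhdsWithin (0, 0) (Ipᶜ ×ˢ Iqᶜ)) (nhds (-2))
    -- (2) l(g,h) → −∞ as (g,h) → (0,0)
    ∧ Tendsto (fun p : ℂ × ℂ => (Tp p.1 + Tq p.2) / (2 * ‖p.1‖ ^ 2))
      (nhdsWithin (0, 0) {p : ℂ × ℂ | p.1 ∉ Ip ∧ p.2 ∉ Iq ∧ p.1 ≠ 0}) atBot :=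
  stmt8_general a b ha hb 𝒜 ℬ Dp Dq hDp hDq Ip Iq Tp Tq hTp hTpR hTq hTqR
end

section
/- Let a, b ∈ (0,1) and α, α', β, β' ∈ ℝ with α ≠ α' and β ≠ β'. Suppose x, y, m ∈ ℝ and g, h ∈ ℂ satisfy: g ∉ ℝ, h ∉ ℝ, |g| = |h|, and the two equations (x−α)(x−α')·g² + ((x−α)(m−(1−a)) + (x−α')(m−a))·g + (m² − m) = 0 and (y−β)(y−β')·h² − ((y−β)(m−b) + (y−β')(m−(1−b)))·h + (m² − m) = 0. Then (x−α)(x−α') = (y−β)(y−β'), min(α,α') < x < max(α,α'), and min(β,β') < y < max(β,β'). In particular z = x + iy lies on the hyperbola {x+iy : (x−(α+α')/2)² − (y−(β+β')/2)² = ((α'−α)² − (β'−β)²)/4} and in the open rectangle (min(α,α'), max(α,α')) × (min(β,β'), max(β,β')). -/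
open Set

/-!
Both equations are real quadratics with a non-real root, so by Vieta their constant term
`m² - m` equals the leading coefficient times `|g|² = |h|²`; this gives the equality of the two
leading coefficients. The discriminant is then `-4A²(Im g)² ≤ 0`, and for the two-atom quadratic
it equals a square plus `4a(1-a)·(x-α)(x-α')`, which forces `(x-α)(x-α') ≤ 0`. Equality would
make the quadratic vanish identically with `m ∈ {a, 1-a}`, impossible as `m² - m ≠ 0` there.
So `x` lies strictly between the atoms. The second equation is the first one for `-h` and the
weight `1-b`.
-/

lemma quadratic_coeffs_of_root_of_im_ne_zero {A B C : ℝ} {g : ℂ} (hg : g.im ≠ 0)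
    (e : (A : ℂ) * g ^ 2 + (B : ℂ) * g + (C : ℂ) = 0) :
    B = -(2 * A * g.re) ∧ C = A * ‖g‖ ^ 2 := by
  rw [Complex.ext_iff] at e
  simp only [Complex.add_re, Complex.add_im, Complex.mul_re, Complex.mul_im, Complex.ofReal_re,
    Complex.ofReal_im, pow_two, Complex.zero_re, Complex.zero_im] at e
  obtain ⟨hre, him⟩ := e
  have hB : 2 * A * g.re + B = 0 :=
    (mul_eq_zero.mp (show (2 * A * g.re + B) * g.im = 0 by linear_combination him)).resolve_right hg
  rw [Complex.sq_norm, Complex.normSq_apply]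
  exact ⟨by linarith, by linear_combination hre - g.re * hB⟩

lemma two_atom_quadratic_constant_ne_zero {a u v m : ℝ} (ha : a ∈ Ioo (0 : ℝ) 1)
    (huv : u ≠ v) (hA : u * v = 0) (hB : u * (m - (1 - a)) + v * (m - a) = 0) :
    m ^ 2 - m ≠ 0 := by
  have ha' : a * (1 - a) ≠ 0 := (mul_pos ha.1 (sub_pos.2 ha.2)).ne'
  rcases mul_eq_zero.mp hA with hu | hv
  · have hm : m = a := by
      subst hu
      have hv : v ≠ 0 := Ne.symm huv
      simpa [hv, sub_eq_zero] using hB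
    rw [hm]; contrapose! ha'; linear_combination -ha'
  · have hm : m = 1 - a := by
      subst hv
      simpa [huv, sub_eq_zero] using hB
    rw [hm]; contrapose! ha'; linear_combination -ha'

lemma two_atom_quadratic_mul_neg {a u v m : ℝ} {g : ℂ} (ha : a ∈ Ioo (0 : ℝ) 1)
    (huv : u ≠ v) (hg : g.im ≠ 0)
    (e : ((u * v : ℝ) : ℂ) * g ^ 2 + ((u * (m - (1 - a)) + v * (m - a) : ℝ) : ℂ) * g +
        ((m ^ 2 - m : ℝ) : ℂ) = 0) :
    u * v < 0 := by
  obtain ⟨hB, hC⟩ := quadratic_coeffs_of_root_of_im_ne_zero hg e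
  have hA : u * v ≠ 0 := by
    intro hA
    exact two_atom_quadratic_constant_ne_zero ha huv hA (by rw [hB, hA]; ring)
      (by rw [hC, hA]; ring)
  have hdisc : (u * (m - (1 - a)) - v * (m - a)) ^ 2 + 4 * (a * (1 - a)) * (u * v)
      = -4 * (u * v) ^ 2 * g.im ^ 2 := by
    rw [← Complex.sq_norm_sub_sq_re]
    linear_combination
      (u * (m - (1 - a)) + v * (m - a) - 2 * (u * v) * g.re) * hB - 4 * (u * v) * hC
  have hw : 0 < a * (1 - a) := mul_pos ha.1 (sub_pos.2 ha.2)
  have hpos : 0 < (u * v) ^ 2 * g.im ^ 2 := by positivity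
  nlinarith [sq_nonneg (u * (m - (1 - a)) - v * (m - a))]

lemma mem_Ioo_min_max_of_sub_mul_sub_neg {x α α' : ℝ} (h : (x - α) * (x - α') < 0) :
    x ∈ Ioo (min α α') (max α α') := by
  rcases mul_neg_iff.mp h with ⟨h1, h2⟩ | ⟨h1, h2⟩
  · exact ⟨min_lt_iff.2 (Or.inl (by linarith)), lt_max_iff.2 (Or.inr (by linarith))⟩
  · exact ⟨min_lt_iff.2 (Or.inr (by linarith)), lt_max_iff.2 (Or.inl (by linarith))⟩

theorem stmt10 (a b α α' β β' x y m : ℝ)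
    (ha : a ∈ Ioo (0 : ℝ) 1) (hb : b ∈ Ioo (0 : ℝ) 1) (hαα : α ≠ α') (hββ : β ≠ β')
    (g h : ℂ) (hg : g.im ≠ 0) (hh : h.im ≠ 0)
    (habs : ‖g‖ = ‖h‖)
    (e1 : (((x - α) * (x - α') : ℝ) : ℂ) * g ^ 2 +
        (((x - α) * (m - (1 - a)) + (x - α') * (m - a) : ℝ) : ℂ) * g +
        ((m ^ 2 - m : ℝ) : ℂ) = 0)
    (e2 : (((y - β) * (y - β') : ℝ) : ℂ) * h ^ 2 -
        (((y - β) * (m - b) + (y - β') * (m - (1 - b)) : ℝ) : ℂ) * h +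
        ((m ^ 2 - m : ℝ) : ℂ) = 0) :
    (x - α) * (x - α') = (y - β) * (y - β')
    ∧ x ∈ Ioo (min α α') (max α α')
    ∧ y ∈ Ioo (min β β') (max β β')
    ∧ (x - (α + α') / 2) ^ 2 - (y - (β + β') / 2) ^ 2 = ((α' - α) ^ 2 - (β' - β) ^ 2) / 4 := by
  have e2' : (((y - β) * (y - β') : ℝ) : ℂ) * (-h) ^ 2 +
      (((y - β) * (m - (1 - (1 - b))) + (y - β') * (m - (1 - b)) : ℝ) : ℂ) * (-h) +
      ((m ^ 2 - m : ℝ) : ℂ) = 0 := by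
    push_cast at e2 ⊢
    linear_combination e2
  have hb' : 1 - b ∈ Ioo (0 : ℝ) 1 := ⟨sub_pos.2 hb.2, by linarith [hb.1]⟩
  have hh' : (-h).im ≠ 0 := by simpa using hh
  have hx := two_atom_quadratic_mul_neg ha (fun he ↦ hαα (sub_right_inj.1 he)) hg e1
  have hy := two_atom_quadratic_mul_neg hb' (fun he ↦ hββ (sub_right_inj.1 he)) hh' e2'
  have hCx := (quadratic_coeffs_of_root_of_im_ne_zero hg e1).2
  have hCy := (quadratic_coeffs_of_root_of_im_ne_zero hh' e2').2
  rw [norm_neg, ← habs] at hCy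
  have hg0 : ‖g‖ ^ 2 ≠ 0 := pow_ne_zero 2 (norm_ne_zero_iff.2 fun h0 ↦ hg (by simp [h0]))
  have hmain : (x - α) * (x - α') = (y - β) * (y - β') :=
    mul_right_cancel₀ hg0 (hCx.symm.trans hCy)
  exact ⟨hmain, mem_Ioo_min_max_of_sub_mul_sub_neg hx, mem_Ioo_min_max_of_sub_mul_sub_neg hy,
    by linear_combination hmain⟩
end

section
/- Let 𝒜, 𝓑 ∈ ℝ ∖ {0}, let ã, b̃ ∈ (−1/2, 1/2), and let x', y' ∈ ℝ be such that ℋ := x'² − 𝒜²/4 = y'² − 𝓑²/4 and ℋ < 0. Set x̃ = x'/𝒜 and ỹ = y'/𝓑. Then there exists m̃ ∈ ℝ satisfying (x'·m̃ + 𝒜ã/2)² + (y'·m̃ − 𝓑b̃/2)² = ℋ·(m̃² − 1/4) if and only if (x̃ỹ)² + 2ãb̃·(x̃ỹ) + (4ã² + 4b̃² − 1)/16 ≤ 0. -/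
open Set

/-! Expanding the squares turns the equation in `m` into the quadratic
`(x'² + y'² - ℋ) m² + (x'𝒜ã - y'𝓑b̃) m + (𝒜²ã² + 𝓑²b̃² + ℋ)/4 = 0`, whose leading coefficient is
positive since `ℋ < 0`. Using `x'² = ℋ + 𝒜²/4` and `y'² = ℋ + 𝓑²/4`, its discriminant is `-(𝒜𝓑)²`
times the quartic expression in `x̃ỹ`, so a real root exists exactly when that expression is `≤ 0`. -/

theorem exists_quadratic_eq_zero_iff_discrim_nonneg {a b c : ℝ} (ha : a ≠ 0) :
    (∃ x, a * (x * x) + b * x + c = 0) ↔ 0 ≤ discrim a b c := by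
  constructor
  · rintro ⟨x, hx⟩
    rw [discrim_eq_sq_of_quadratic_eq_zero hx]
    positivity
  · intro hd
    exact exists_quadratic_eq_zero ha ⟨√(discrim a b c), (Real.mul_self_sqrt hd).symm⟩

section HyperbolaQuadratic

variable (A B at' bt x' y' H : ℝ)

theorem hyperbola_eq_iff_quadratic_eq_zero (m : ℝ) :
    (x' * m + A * at' / 2) ^ 2 + (y' * m - B * bt / 2) ^ 2 = H * (m ^ 2 - 1 / 4) ↔
      (x' ^ 2 + y' ^ 2 - H) * (m * m) + (x' * A * at' - y' * B * bt) * m +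
        (A ^ 2 * at' ^ 2 + B ^ 2 * bt ^ 2 + H) / 4 = 0 := by
  constructor <;> intro h <;> linear_combination h

variable {A B at' bt x' y' H}

theorem discrim_hyperbola_quadratic (hA : A ≠ 0) (hB : B ≠ 0)
    (hH1 : H = x' ^ 2 - A ^ 2 / 4) (hH2 : H = y' ^ 2 - B ^ 2 / 4) :
    discrim (x' ^ 2 + y' ^ 2 - H) (x' * A * at' - y' * B * bt)
        ((A ^ 2 * at' ^ 2 + B ^ 2 * bt ^ 2 + H) / 4) =
      (A * B) ^ 2 * -(((x' / A) * (y' / B)) ^ 2 + 2 * at' * bt * ((x' / A) * (y' / B)) +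
        (4 * at' ^ 2 + 4 * bt ^ 2 - 1) / 16) := by
  rw [discrim]
  field_simp
  linear_combination (16 * B ^ 2 * bt ^ 2 - 4 * B ^ 2) * hH1 +
    (16 * A ^ 2 * at' ^ 2 - 16 * x' ^ 2 + 16 * H) * hH2

end HyperbolaQuadratic

theorem stmt11_general (A B at' bt x' y' H : ℝ)
    (hA : A ≠ 0) (hB : B ≠ 0)
    (hH1 : H = x' ^ 2 - A ^ 2 / 4) (hH2 : H = y' ^ 2 - B ^ 2 / 4) (hHneg : H < 0) :
    (∃ m : ℝ, (x' * m + A * at' / 2) ^ 2 + (y' * m - B * bt / 2) ^ 2 = H * (m ^ 2 - 1 / 4))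
      ↔ ((x' / A) * (y' / B)) ^ 2 + 2 * at' * bt * ((x' / A) * (y' / B)) +
          (4 * at' ^ 2 + 4 * bt ^ 2 - 1) / 16 ≤ 0 := by
  have hlead : x' ^ 2 + y' ^ 2 - H ≠ 0 := by
    have : 0 < x' ^ 2 + y' ^ 2 - H := by nlinarith [sq_nonneg x', sq_nonneg y']
    exact this.ne'
  have hAB : 0 < (A * B) ^ 2 := by positivity
  simp only [hyperbola_eq_iff_quadratic_eq_zero]
  rw [exists_quadratic_eq_zero_iff_discrim_nonneg hlead, discrim_hyperbola_quadratic hA hB hH1 hH2,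
    mul_nonneg_iff_of_pos_left hAB, neg_nonneg]

theorem stmt11 (A B at' bt x' y' H : ℝ)
    (hA : A ≠ 0) (hB : B ≠ 0)
    (hat : at' ∈ Ioo (-(1 / 2) : ℝ) (1 / 2)) (hbt : bt ∈ Ioo (-(1 / 2) : ℝ) (1 / 2))
    (hH1 : H = x' ^ 2 - A ^ 2 / 4) (hH2 : H = y' ^ 2 - B ^ 2 / 4) (hHneg : H < 0) :
    (∃ m : ℝ, (x' * m + A * at' / 2) ^ 2 + (y' * m - B * bt / 2) ^ 2 = H * (m ^ 2 - 1 / 4))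
      ↔ ((x' / A) * (y' / B)) ^ 2 + 2 * at' * bt * ((x' / A) * (y' / B)) +
          (4 * at' ^ 2 + 4 * bt ^ 2 - 1) / 16 ≤ 0 :=
  stmt11_general A B at' bt x' y' H hA hB hH1 hH2 hHneg
end

section
/- Let n, k ≥ 1 and work in the multivariate polynomial ring R = ℤ[a₀, …, aₙ, b₀, …, b_k, m]. Define Ã(x) = aₙxⁿ + Σ_{i=1}^{n−1} aᵢ·m^{n−1−i}·xⁱ + a₀·m^{n−1}(m−1) and B̃(x) = b_k x^k + Σ_{j=1}^{k−1} b_j·(m−1)^{k−1−j}·x^j + b₀·(m−1)^{k−1}·m in R[x]. Then m^{n−1}(m−1)^{k−1} divides the determinant of the (n+k)×(n+k) Sylvester matrix of Ã and B̃ formed with respect to the degrees n and k (equivalently, divides the resultant Res(Ã, B̃)) in R. -/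
/-- The Sylvester matrix of two coefficient sequences `a` (of formal degree `n`)
and `b` (of formal degree `k`): the first `k` columns contain the downward-shifted
sequence `(a n, a (n-1), …, a 0)` and the last `n` columns contain the
downward-shifted sequence `(b k, …, b 0)`.  Its determinant is the resultant. -/
def sylvester {R : Type*} [CommRing R] (n k : ℕ) (a b : ℕ → R) :
    Matrix (Fin (n + k)) (Fin (n + k)) R :=
  Matrix.of fun i j =>
    if (j : ℕ) < k then
      (if (j : ℕ) ≤ (i : ℕ) ∧ (i : ℕ) ≤ (j : ℕ) + n then a (n + (j : ℕ) - (i : ℕ)) else 0)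
    else
      (if (j : ℕ) - k ≤ (i : ℕ) ∧ (i : ℕ) ≤ ((j : ℕ) - k) + k then
        b (k + ((j : ℕ) - k) - (i : ℕ)) else 0)

open Finset in
lemma perm_bound_left (n k : ℕ) (hk : 1 ≤ k) (σ : Equiv.Perm (Fin (n + k)))
    (hbb : ∀ c : Fin (n + k), k ≤ (c : ℕ) → (σ c : ℕ) ≤ (c : ℕ)) :
    n - 1 ≤ ∑ c : Fin (n + k),
      (if (c : ℕ) < k then (σ c : ℕ) - (c : ℕ) - 1 else if σ c = c then 1 else 0) := by
  classical
  set e : Fin (n + k) → ℕ :=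
    fun c => if (c : ℕ) < k then (σ c : ℕ) - (c : ℕ) - 1 else if σ c = c then 1 else 0 with he
  have hN : 0 < n + k := by omega
  set T : Finset (Fin (n + k)) :=
    Finset.univ.filter (fun x => ¬(k ≤ (x : ℕ) ∧ σ x = x)) with hT
  have hTne : T.Nonempty := by
    refine ⟨⟨0, hN⟩, ?_⟩
    simp only [hT, Finset.mem_filter, Finset.mem_univ, true_and]
    intro h
    omega
  set r := T.max' hTne with hr
  have hfix : ∀ x : Fin (n + k), r < x → k ≤ (x : ℕ) ∧ σ x = x := by
    intro x hx
    by_contra hc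
    have hxT : x ∈ T := by simp only [hT, Finset.mem_filter, Finset.mem_univ, true_and]; exact hc
    exact absurd (Finset.le_max' T x hxT) (not_le.mpr hx)
  have hIoi : ∀ x ∈ Finset.Ioi r, e x = 1 := by
    intro x hx
    obtain ⟨h1, h2⟩ := hfix x (Finset.mem_Ioi.mp hx)
    simp [he, not_lt.mpr h1, h2]
  have hsumIoi : ∑ x ∈ Finset.Ioi r, e x = n + k - 1 - (r : ℕ) := by
    rw [Finset.sum_congr rfl hIoi, Finset.sum_const, smul_eq_mul, mul_one, Fin.card_Ioi]
  by_cases hrk : (r : ℕ) < k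
  · have hle : (∑ x ∈ Finset.Ioi r, e x) ≤ ∑ x : Fin (n + k), e x :=
      Finset.sum_le_sum_of_subset (Finset.subset_univ _)
    have h2 : n - 1 ≤ ∑ x ∈ Finset.Ioi r, e x := by omega
    exact le_trans h2 hle
  · push_neg at hrk
    have hrT : r ∈ T := T.max'_mem hTne
    simp only [hT, Finset.mem_filter, Finset.mem_univ, true_and, not_and] at hrT
    have hrne : σ r ≠ r := hrT hrk
    set c := σ.symm r with hc
    have hσc : σ c = r := Equiv.apply_symm_apply σ r
    have hck : (c : ℕ) < k := by
      by_contra hge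
      push_neg at hge
      have hle2 : (σ c : ℕ) ≤ (c : ℕ) := hbb c hge
      rw [hσc] at hle2
      rcases lt_trichotomy c r with h | h | h
      · have : (c : ℕ) < (r : ℕ) := h
        omega
      · exact hrne (by rw [← h, hσc, h])
      · have h2 := (hfix c h).2
        rw [hσc] at h2
        exact absurd h2 (ne_of_lt h)
    have hcnot : c ∉ Finset.Ioi r := by
      simp only [Finset.mem_Ioi]
      intro hlt
      have : (r : ℕ) < (c : ℕ) := hlt
      omega
    have h1 : (∑ x ∈ insert c (Finset.Ioi r), e x) ≤ ∑ x : Fin (n + k), e x :=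
      Finset.sum_le_sum_of_subset (Finset.subset_univ _)
    rw [Finset.sum_insert hcnot, hsumIoi] at h1
    have hec : e c = (r : ℕ) - (c : ℕ) - 1 := by
      simp [he, hck, hσc]
    have hrN : (r : ℕ) < n + k := r.isLt
    have h2 : n - 1 ≤ (r : ℕ) - (c : ℕ) - 1 + (n + k - 1 - (r : ℕ)) := by omega
    rw [hec] at h1
    exact le_trans h2 h1

open Finset in
lemma perm_bound_right (n k : ℕ) (hn : 1 ≤ n) (σ : Equiv.Perm (Fin (n + k)))
    (hab : ∀ c : Fin (n + k), (c : ℕ) < k → (σ c : ℕ) ≤ (c : ℕ) + n) :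
    k - 1 ≤ ∑ c : Fin (n + k),
      (if (c : ℕ) < k then (if (σ c : ℕ) = (c : ℕ) + n then 1 else 0)
       else (σ c : ℕ) - ((c : ℕ) - k) - 1) := by
  classical
  set e : Fin (n + k) → ℕ :=
    fun c => if (c : ℕ) < k then (if (σ c : ℕ) = (c : ℕ) + n then 1 else 0)
      else (σ c : ℕ) - ((c : ℕ) - k) - 1 with he
  have hkN : k < n + k := by omega
  set T : Finset (Fin (n + k)) :=
    Finset.univ.filter (fun x => (x : ℕ) < k ∧ ¬((σ x : ℕ) = (x : ℕ) + n)) with hT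
  by_cases hTne : T.Nonempty
  · set s := T.max' hTne with hs
    have hsT : s ∈ T := T.max'_mem hTne
    simp only [hT, Finset.mem_filter, Finset.mem_univ, true_and] at hsT
    obtain ⟨hsk, hsne⟩ := hsT
    have hfix : ∀ x : Fin (n + k), s < x → (x : ℕ) < k → (σ x : ℕ) = (x : ℕ) + n := by
      intro x hx hxk
      by_contra hcon
      have hxT : x ∈ T := by
        simp only [hT, Finset.mem_filter, Finset.mem_univ, true_and]; exact ⟨hxk, hcon⟩
      exact absurd (Finset.le_max' T x hxT) (not_le.mpr hx)
    set kk : Fin (n + k) := ⟨k, hkN⟩ with hkk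
    have hIoo : ∀ x ∈ Finset.Ioo s kk, e x = 1 := by
      intro x hx
      rw [Finset.mem_Ioo] at hx
      have hxk : (x : ℕ) < k := hx.2
      have := hfix x hx.1 hxk
      simp [he, hxk, this]
    have hsum1 : ∑ x ∈ Finset.Ioo s kk, e x = k - (s : ℕ) - 1 := by
      rw [Finset.sum_congr rfl hIoo, Finset.sum_const, smul_eq_mul, mul_one, Fin.card_Ioo]
    set t : Fin (n + k) := ⟨(s : ℕ) + n, by omega⟩ with ht
    set c := σ.symm t with hc
    have hσc : σ c = t := Equiv.apply_symm_apply σ t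
    have hσcv : (σ c : ℕ) = (s : ℕ) + n := by rw [hσc]
    have hck : k ≤ (c : ℕ) := by
      by_contra hlt
      push_neg at hlt
      have hub := hab c hlt
      rcases lt_trichotomy c s with h | h | h
      · have hcs : (c : ℕ) < (s : ℕ) := h
        omega
      · apply hsne
        rw [← h]
        exact hσcv.trans (by rw [h])
      · have hfx := hfix c h hlt
        have hcs : (s : ℕ) < (c : ℕ) := h
        omega
    have hcnot : c ∉ Finset.Ioo s kk := by
      rw [Finset.mem_Ioo]
      intro hmem
      have : (c : ℕ) < k := hmem.2
      omega
    have h1 : (∑ x ∈ insert c (Finset.Ioo s kk), e x) ≤ ∑ x : Fin (n + k), e x :=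
      Finset.sum_le_sum_of_subset (Finset.subset_univ _)
    rw [Finset.sum_insert hcnot, hsum1] at h1
    have hec : e c = (s : ℕ) + n - ((c : ℕ) - k) - 1 := by
      simp [he, not_lt.mpr hck, hσcv]
    have hcN : (c : ℕ) < n + k := c.isLt
    have hsk' : (s : ℕ) < k := hsk
    have h2 : k - 1 ≤ (s : ℕ) + n - ((c : ℕ) - k) - 1 + (k - (s : ℕ) - 1) := by omega
    rw [hec] at h1
    exact le_trans h2 h1
  · rw [Finset.not_nonempty_iff_eq_empty] at hTne
    have hall : ∀ x : Fin (n + k), (x : ℕ) < k → (σ x : ℕ) = (x : ℕ) + n := by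
      intro x hxk
      by_contra hcon
      have hxm : x ∈ T := by
        simp only [hT, Finset.mem_filter, Finset.mem_univ, true_and]; exact ⟨hxk, hcon⟩
      rw [hTne] at hxm
      exact absurd hxm (Finset.notMem_empty x)
    set kk : Fin (n + k) := ⟨k, hkN⟩ with hkk
    have hIio : ∀ x ∈ Finset.Iio kk, e x = 1 := by
      intro x hx
      rw [Finset.mem_Iio] at hx
      have hxk : (x : ℕ) < k := hx
      simp [he, hxk, hall x hxk]
    have hsum1 : ∑ x ∈ Finset.Iio kk, e x = k := by
      rw [Finset.sum_congr rfl hIio, Finset.sum_const, smul_eq_mul, mul_one, Fin.card_Iio]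
    have h1 : (∑ x ∈ Finset.Iio kk, e x) ≤ ∑ x : Fin (n + k), e x :=
      Finset.sum_le_sum_of_subset (Finset.subset_univ _)
    have h2 : k - 1 ≤ ∑ x ∈ Finset.Iio kk, e x := by omega
    exact le_trans h2 h1

lemma sylvester_dvd_left {R : Type*} [CommRing R] (n k : ℕ) (hk : 1 ≤ k)
    (x : R) (a b : ℕ → R) (ha : ∀ t, t < n → x ^ (n - 1 - t) ∣ a t) (hb : x ∣ b 0) :
    x ^ (n - 1) ∣ (sylvester n k a b).det := by
  classical
  rw [Matrix.det_apply]
  refine Finset.dvd_sum ?_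
  intro σ _
  rw [Units.smul_def, zsmul_eq_mul]
  refine Dvd.dvd.mul_left ?_ _
  by_cases hz : ∃ c, sylvester n k a b (σ c) c = 0
  · obtain ⟨c, hcz⟩ := hz
    rw [show (∏ i : Fin (n + k), sylvester n k a b (σ i) i) = 0 from
      Finset.prod_eq_zero (Finset.mem_univ c) hcz]
    exact dvd_zero _
  push_neg at hz
  have hband : ∀ c : Fin (n + k), k ≤ (c : ℕ) → (σ c : ℕ) ≤ (c : ℕ) := by
    intro c hkc
    have h0 := hz c
    simp only [sylvester, Matrix.of_apply, if_neg (not_lt.mpr hkc)] at h0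
    by_contra hgt
    push_neg at hgt
    have hcond : ¬((c : ℕ) - k ≤ (σ c : ℕ) ∧ (σ c : ℕ) ≤ (c : ℕ) - k + k) := by omega
    exact h0 (if_neg hcond)
  set e : Fin (n + k) → ℕ :=
    fun c => if (c : ℕ) < k then (σ c : ℕ) - (c : ℕ) - 1 else if σ c = c then 1 else 0 with he
  have hdvd : ∀ c : Fin (n + k), x ^ e c ∣ sylvester n k a b (σ c) c := by
    intro c
    by_cases hck : (c : ℕ) < k
    · have hec : e c = (σ c : ℕ) - (c : ℕ) - 1 := if_pos hck
      rw [hec]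
      simp only [sylvester, Matrix.of_apply, if_pos hck]
      split_ifs with hcond
      · rcases Nat.lt_or_ge (c : ℕ) (σ c : ℕ) with hlt | hge
        · have ht : n + (c : ℕ) - (σ c : ℕ) < n := by omega
          have hd := ha _ ht
          have hexp : n - 1 - (n + (c : ℕ) - (σ c : ℕ)) = (σ c : ℕ) - (c : ℕ) - 1 := by omega
          rwa [hexp] at hd
        · have hz0 : (σ c : ℕ) - (c : ℕ) - 1 = 0 := by omega
          rw [hz0, pow_zero]
          exact one_dvd _
      · exact dvd_zero _
    · have hkc : k ≤ (c : ℕ) := le_of_not_gt hck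
      by_cases hfix : σ c = c
      · have hec : e c = 1 := by simp [he, hck, hfix]
        have hval : sylvester n k a b (σ c) c = b 0 := by
          simp only [sylvester, Matrix.of_apply, if_neg hck]
          rw [if_pos]
          · congr 1
            rw [hfix]
            omega
          · rw [hfix]
            omega
        rw [hec, pow_one, hval]
        exact hb
      · have hec : e c = 0 := by simp [he, hck, hfix]
        rw [hec, pow_zero]
        exact one_dvd _
  calc x ^ (n - 1) ∣ x ^ (∑ c, e c) := pow_dvd_pow x (perm_bound_left n k hk σ hband)
    _ = ∏ c, x ^ e c := (Finset.prod_pow_eq_pow_sum _ _ _).symm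
    _ ∣ ∏ c, sylvester n k a b (σ c) c :=
        Finset.prod_dvd_prod_of_dvd _ _ (fun c _ => hdvd c)

lemma sylvester_dvd_right {R : Type*} [CommRing R] (n k : ℕ) (hn : 1 ≤ n)
    (x : R) (a b : ℕ → R) (hb : ∀ t, t < k → x ^ (k - 1 - t) ∣ b t) (ha : x ∣ a 0) :
    x ^ (k - 1) ∣ (sylvester n k a b).det := by
  classical
  rw [Matrix.det_apply]
  refine Finset.dvd_sum ?_
  intro σ _
  rw [Units.smul_def, zsmul_eq_mul]
  refine Dvd.dvd.mul_left ?_ _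
  by_cases hz : ∃ c, sylvester n k a b (σ c) c = 0
  · obtain ⟨c, hcz⟩ := hz
    rw [show (∏ i : Fin (n + k), sylvester n k a b (σ i) i) = 0 from
      Finset.prod_eq_zero (Finset.mem_univ c) hcz]
    exact dvd_zero _
  push_neg at hz
  have hband : ∀ c : Fin (n + k), (c : ℕ) < k → (σ c : ℕ) ≤ (c : ℕ) + n := by
    intro c hck
    have h0 := hz c
    simp only [sylvester, Matrix.of_apply, if_pos hck] at h0
    by_contra hgt
    push_neg at hgt
    have hcond : ¬((c : ℕ) ≤ (σ c : ℕ) ∧ (σ c : ℕ) ≤ (c : ℕ) + n) := by omega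
    exact h0 (if_neg hcond)
  set e : Fin (n + k) → ℕ :=
    fun c => if (c : ℕ) < k then (if (σ c : ℕ) = (c : ℕ) + n then 1 else 0)
      else (σ c : ℕ) - ((c : ℕ) - k) - 1 with he
  have hdvd : ∀ c : Fin (n + k), x ^ e c ∣ sylvester n k a b (σ c) c := by
    intro c
    by_cases hck : (c : ℕ) < k
    · by_cases hfix : (σ c : ℕ) = (c : ℕ) + n
      · have hec : e c = 1 := by simp [he, hck, hfix]
        have hval : sylvester n k a b (σ c) c = a 0 := by
          simp only [sylvester, Matrix.of_apply, if_pos hck]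
          rw [if_pos]
          · congr 1
            omega
          · omega
        rw [hec, pow_one, hval]
        exact ha
      · have hec : e c = 0 := by simp [he, hck, hfix]
        rw [hec, pow_zero]
        exact one_dvd _
    · have hkc : k ≤ (c : ℕ) := le_of_not_gt hck
      have hec : e c = (σ c : ℕ) - ((c : ℕ) - k) - 1 := by simp [he, hck]
      rw [hec]
      simp only [sylvester, Matrix.of_apply, if_neg hck]
      split_ifs with hcond
      · rcases Nat.lt_or_ge ((c : ℕ) - k) (σ c : ℕ) with hlt | hge
        · have ht : k + ((c : ℕ) - k) - (σ c : ℕ) < k := by omega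
          have hd := hb _ ht
          have hexp : k - 1 - (k + ((c : ℕ) - k) - (σ c : ℕ))
              = (σ c : ℕ) - ((c : ℕ) - k) - 1 := by omega
          rwa [hexp] at hd
        · have hz0 : (σ c : ℕ) - ((c : ℕ) - k) - 1 = 0 := by omega
          rw [hz0, pow_zero]
          exact one_dvd _
      · exact dvd_zero _
  calc x ^ (k - 1) ∣ x ^ (∑ c, e c) := pow_dvd_pow x (perm_bound_right n k hn σ hband)
    _ = ∏ c, x ^ e c := (Finset.prod_pow_eq_pow_sum _ _ _).symm
    _ ∣ ∏ c, sylvester n k a b (σ c) c :=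
        Finset.prod_dvd_prod_of_dvd _ _ (fun c _ => hdvd c)

/-- in `ℤ[a₀,…,aₙ,b₀,…,b_k,m]`, the monomial `m^(n-1)·(m-1)^(k-1)` divides
the resultant (Sylvester determinant w.r.t. degrees `n`, `k`) of
`Ã(x) = aₙxⁿ + Σ_{i=1}^{n-1} aᵢ m^(n-1-i) xⁱ + a₀ m^(n-1)(m-1)` and
`B̃(x) = b_k x^k + Σ_{j=1}^{k-1} b_j (m-1)^(k-1-j) x^j + b₀ (m-1)^(k-1) m`. -/
theorem stmt12 (n k : ℕ) (hn : 1 ≤ n) (hk : 1 ≤ k)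
    (m : MvPolynomial (Fin (n + 1) ⊕ (Fin (k + 1) ⊕ Fin 1)) ℤ)
    (hm : m = MvPolynomial.X (Sum.inr (Sum.inr 0)))
    (ca cb : ℕ → MvPolynomial (Fin (n + 1) ⊕ (Fin (k + 1) ⊕ Fin 1)) ℤ)
    (hca : ∀ i : ℕ, ∀ hi : i < n + 1, ca i =
      (if i = n then MvPolynomial.X (Sum.inl ⟨i, hi⟩)
       else if i = 0 then MvPolynomial.X (Sum.inl ⟨i, hi⟩) * m ^ (n - 1) * (m - 1)
       else MvPolynomial.X (Sum.inl ⟨i, hi⟩) * m ^ (n - 1 - i)))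
    (hcb : ∀ j : ℕ, ∀ hj : j < k + 1, cb j =
      (if j = k then MvPolynomial.X (Sum.inr (Sum.inl ⟨j, hj⟩))
       else if j = 0 then MvPolynomial.X (Sum.inr (Sum.inl ⟨j, hj⟩)) * (m - 1) ^ (k - 1) * m
       else MvPolynomial.X (Sum.inr (Sum.inl ⟨j, hj⟩)) * (m - 1) ^ (k - 1 - j))) :
    m ^ (n - 1) * (m - 1) ^ (k - 1) ∣ (sylvester n k ca cb).det := by
  have h1 : m ^ (n - 1) ∣ (sylvester n k ca cb).det := by
    apply sylvester_dvd_left n k hk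
    · intro t ht
      rw [hca t (by omega)]
      rcases eq_or_ne t 0 with rfl | h0
      · rw [if_neg (by omega), if_pos rfl]
        exact ⟨MvPolynomial.X (Sum.inl ⟨0, by omega⟩) * (m - 1), by rw [Nat.sub_zero]; ring⟩
      · rw [if_neg (by omega), if_neg h0]
        exact ⟨MvPolynomial.X (Sum.inl ⟨t, by omega⟩), mul_comm _ _⟩
    · rw [hcb 0 (by omega), if_neg (by omega), if_pos rfl]
      exact ⟨MvPolynomial.X (Sum.inr (Sum.inl ⟨0, by omega⟩)) * (m - 1) ^ (k - 1), by ring⟩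
  have h2 : (m - 1) ^ (k - 1) ∣ (sylvester n k ca cb).det := by
    apply sylvester_dvd_right n k hn
    · intro t ht
      rw [hcb t (by omega)]
      rcases eq_or_ne t 0 with rfl | h0
      · rw [if_neg (by omega), if_pos rfl]
        exact ⟨MvPolynomial.X (Sum.inr (Sum.inl ⟨0, by omega⟩)) * m, by rw [Nat.sub_zero]; ring⟩
      · rw [if_neg (by omega), if_neg h0]
        exact ⟨MvPolynomial.X (Sum.inr (Sum.inl ⟨t, by omega⟩)), mul_comm _ _⟩
    · rw [hca 0 (by omega), if_neg (by omega), if_pos rfl]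
      exact ⟨MvPolynomial.X (Sum.inl ⟨0, by omega⟩) * m ^ (n - 1), by ring⟩
  have hco1 : IsCoprime m (m - 1) := ⟨1, -1, by ring⟩
  have hco : IsCoprime (m ^ (n - 1)) ((m - 1) ^ (k - 1)) := hco1.pow
  exact hco.mul_dvd h1 h2
end

section
/- Let n, k ≥ 1, let a₁, …, aₙ ∈ ℂ with a₁ + ⋯ + aₙ = 1, let b₁, …, b_k ∈ ℂ with b₁ + ⋯ + b_k = 1, and let α₁, …, αₙ, β₁, …, β_k ∈ ℝ. In the ring ℂ[m, x, y][g], define P(g) = Π_{i=1}^{n}((x − αᵢ)g + m) − Σ_{i=1}^{n} aᵢ·Π_{s≠i}((x − α_s)g + m) and Q(g) = Π_{j=1}^{k}(i(y − β_j)g + (1 − m)) − Σ_{j=1}^{k} b_j·Π_{s≠j}(i(y − β_s)g + (1 − m)), where i is the imaginary unit. Then the resultant of P and Q with respect to g, computed with respect to the formal degrees n and k (that is, the determinant of the (n+k)×(n+k) Sylvester matrix built from the coefficients of P up to degree n and of Q up to degree k), is divisible by m^{n−1}(m−1)^{k−1} in ℂ[m, x, y]. -/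
private lemma sum_shift (c : ℕ) : ∀ N : ℕ, ∑ i ∈ Finset.range N, (i - c)
    = (∑ i ∈ Finset.range N, (i - c - 1)) + (N - c - 1)
  | 0 => by simp
  | (N + 1) => by
      rw [Finset.sum_range_succ, Finset.sum_range_succ, sum_shift c N]; omega

private lemma sum_shift2 (n : ℕ) : ∀ k : ℕ, ∑ i ∈ Finset.range (n + k), (i - n)
    = (∑ j ∈ Finset.range k, (j - 1)) + (k - 1)
  | 0 => by
      rw [Nat.add_zero]
      simp only [Finset.range_zero, Finset.sum_empty, Nat.zero_sub, Nat.add_zero]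
      exact Finset.sum_eq_zero fun i hi => by rw [Finset.mem_range] at hi; omega
  | (k + 1) => by
      rw [show n + (k + 1) = (n + k) + 1 from rfl, Finset.sum_range_succ,
        Finset.sum_range_succ, sum_shift2 n k]
      omega

/-- The quotient matrix for the first divisibility. -/
private def keyT {R : Type*} [CommRing R] (n k : ℕ) (u : R) (ρ : ℕ → R) (q : ℕ → R) (κ : R) :
    Matrix (Fin (n + k)) (Fin (n + k)) R := fun i j =>
  if (j : ℕ) < k then
    (if (j : ℕ) ≤ (i : ℕ) ∧ (i : ℕ) ≤ (j : ℕ) + n then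
      u ^ ((n - 1 - (n + (j : ℕ) - (i : ℕ))) - ((i : ℕ) - k)) * ρ (n + (j : ℕ) - (i : ℕ))
    else 0)
  else
    (if (j : ℕ) - k ≤ (i : ℕ) ∧ (i : ℕ) ≤ ((j : ℕ) - k) + k then
      u ^ (((1 - (k + ((j : ℕ) - k) - (i : ℕ))) + ((j : ℕ) - k - 1)) - ((i : ℕ) - k)) *
        (if k + ((j : ℕ) - k) - (i : ℕ) = 0 then κ else q (k + ((j : ℕ) - k) - (i : ℕ)))
    else 0)

private lemma key {R : Type*} [CommRing R] [IsDomain R] (n k : ℕ)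
    (u : R) (hu : u ≠ 0) (p q : ℕ → R)
    (hp : ∀ l, u ^ (n - 1 - l) ∣ p l) (hq : u ∣ q 0) :
    u ^ (n - 1) ∣ (sylvester n k p q).det := by
  have hp' : ∀ l, ∃ c, p l = u ^ (n - 1 - l) * c := hp
  choose ρ hρ using hp'
  obtain ⟨κ, hκ⟩ := hq
  have hmat : sylvester n k p q * Matrix.diagonal (fun j : Fin (n + k) => u ^ ((j : ℕ) - k - 1))
      = Matrix.diagonal (fun i : Fin (n + k) => u ^ ((i : ℕ) - k)) * keyT n k u ρ q κ := by
    ext i j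
    rw [Matrix.mul_diagonal, Matrix.diagonal_mul]
    simp only [sylvester, keyT, Matrix.of_apply]
    by_cases hjk : (j : ℕ) < k
    · simp only [if_pos hjk]
      by_cases hband : (j : ℕ) ≤ (i : ℕ) ∧ (i : ℕ) ≤ (j : ℕ) + n
      · simp only [if_pos hband]
        obtain ⟨h1, h2⟩ := hband
        set e : ℕ := (n - 1 - (n + (j : ℕ) - (i : ℕ))) - ((i : ℕ) - k) with he
        have hd : (j : ℕ) - k - 1 = 0 := by omega
        have hexp : n - 1 - (n + (j : ℕ) - (i : ℕ)) = ((i : ℕ) - k) + e := by omega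
        calc p (n + (j : ℕ) - (i : ℕ)) * u ^ ((j : ℕ) - k - 1)
            = u ^ (n - 1 - (n + (j : ℕ) - (i : ℕ))) * ρ (n + (j : ℕ) - (i : ℕ)) := by
              rw [hρ, hd, pow_zero, mul_one]
          _ = u ^ (((i : ℕ) - k) + e) * ρ (n + (j : ℕ) - (i : ℕ)) := by rw [← hexp]
          _ = u ^ ((i : ℕ) - k) * (u ^ e * ρ (n + (j : ℕ) - (i : ℕ))) := by
              rw [pow_add, mul_assoc]
      · simp only [if_neg hband, zero_mul, mul_zero]
    · simp only [if_neg hjk]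
      by_cases hband : (j : ℕ) - k ≤ (i : ℕ) ∧ (i : ℕ) ≤ ((j : ℕ) - k) + k
      · simp only [if_pos hband]
        obtain ⟨h1, h2⟩ := hband
        by_cases hl : k + ((j : ℕ) - k) - (i : ℕ) = 0
        · simp only [if_pos hl]
          set e : ℕ := ((1 - (k + ((j : ℕ) - k) - (i : ℕ))) + ((j : ℕ) - k - 1)) - ((i : ℕ) - k)
            with he
          have hexp : 1 + ((j : ℕ) - k - 1) = ((i : ℕ) - k) + e := by omega
          rw [hl, hκ]
          calc u * κ * u ^ ((j : ℕ) - k - 1)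
              = u ^ (1 + ((j : ℕ) - k - 1)) * κ := by rw [pow_add, pow_one]; ring
            _ = u ^ (((i : ℕ) - k) + e) * κ := by rw [hexp]
            _ = u ^ ((i : ℕ) - k) * (u ^ e * κ) := by rw [pow_add, mul_assoc]
        · simp only [if_neg hl]
          set e : ℕ := ((1 - (k + ((j : ℕ) - k) - (i : ℕ))) + ((j : ℕ) - k - 1)) - ((i : ℕ) - k)
            with he
          have hexp : (j : ℕ) - k - 1 = ((i : ℕ) - k) + e := by omega
          calc q (k + ((j : ℕ) - k) - (i : ℕ)) * u ^ ((j : ℕ) - k - 1)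
              = u ^ (((i : ℕ) - k) + e) * q (k + ((j : ℕ) - k) - (i : ℕ)) := by
                rw [hexp]; ring
            _ = u ^ ((i : ℕ) - k) * (u ^ e * q (k + ((j : ℕ) - k) - (i : ℕ))) := by
                rw [pow_add, mul_assoc]
      · simp only [if_neg hband, zero_mul, mul_zero]
  have hdet := congrArg Matrix.det hmat
  rw [Matrix.det_mul, Matrix.det_mul, Matrix.det_diagonal, Matrix.det_diagonal,
    Finset.prod_pow_eq_pow_sum, Finset.prod_pow_eq_pow_sum] at hdet
  have hsum : (∑ i : Fin (n + k), ((i : ℕ) - k))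
      = (∑ j : Fin (n + k), ((j : ℕ) - k - 1)) + (n - 1) := by
    rw [Fin.sum_univ_eq_sum_range (fun i => i - k) (n + k),
      Fin.sum_univ_eq_sum_range (fun j => j - k - 1) (n + k), sum_shift k (n + k)]
    congr 1
    omega
  rw [hsum, pow_add] at hdet
  refine ⟨(keyT n k u ρ q κ).det, ?_⟩
  have h0 : u ^ (∑ j : Fin (n + k), ((j : ℕ) - k - 1)) ≠ 0 := pow_ne_zero _ hu
  apply mul_left_cancel₀ h0
  linear_combination hdet

/-- The quotient matrix for the second (mirrored) divisibility. -/
private def keyT2 {R : Type*} [CommRing R] (n k : ℕ) (u : R) (p : ℕ → R) (π : R) (κ : ℕ → R) :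
    Matrix (Fin (n + k)) (Fin (n + k)) R := fun i j =>
  if (j : ℕ) < k then
    (if (j : ℕ) ≤ (i : ℕ) ∧ (i : ℕ) ≤ (j : ℕ) + n then
      u ^ (((1 - (n + (j : ℕ) - (i : ℕ))) + ((j : ℕ) - 1)) - ((i : ℕ) - n)) *
        (if n + (j : ℕ) - (i : ℕ) = 0 then π else p (n + (j : ℕ) - (i : ℕ)))
    else 0)
  else
    (if (j : ℕ) - k ≤ (i : ℕ) ∧ (i : ℕ) ≤ ((j : ℕ) - k) + k then
      u ^ ((k - 1 - (k + ((j : ℕ) - k) - (i : ℕ))) - ((i : ℕ) - n)) *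
        κ (k + ((j : ℕ) - k) - (i : ℕ))
    else 0)

private lemma key2 {R : Type*} [CommRing R] [IsDomain R] (n k : ℕ)
    (u : R) (hu : u ≠ 0) (p q : ℕ → R)
    (hq : ∀ l, u ^ (k - 1 - l) ∣ q l) (hp : u ∣ p 0) :
    u ^ (k - 1) ∣ (sylvester n k p q).det := by
  have hq' : ∀ l, ∃ c, q l = u ^ (k - 1 - l) * c := hq
  choose κ hκ using hq'
  obtain ⟨π, hπ⟩ := hp
  have hmat : sylvester n k p q *
        Matrix.diagonal (fun j : Fin (n + k) => u ^ (if (j : ℕ) < k then (j : ℕ) - 1 else 0))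
      = Matrix.diagonal (fun i : Fin (n + k) => u ^ ((i : ℕ) - n)) * keyT2 n k u p π κ := by
    ext i j
    rw [Matrix.mul_diagonal, Matrix.diagonal_mul]
    simp only [sylvester, keyT2, Matrix.of_apply]
    by_cases hjk : (j : ℕ) < k
    · simp only [if_pos hjk]
      by_cases hband : (j : ℕ) ≤ (i : ℕ) ∧ (i : ℕ) ≤ (j : ℕ) + n
      · simp only [if_pos hband]
        obtain ⟨h1, h2⟩ := hband
        by_cases hl : n + (j : ℕ) - (i : ℕ) = 0
        · simp only [if_pos hl]
          set e : ℕ := ((1 - (n + (j : ℕ) - (i : ℕ))) + ((j : ℕ) - 1)) - ((i : ℕ) - n) with he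
          have hexp : 1 + ((j : ℕ) - 1) = ((i : ℕ) - n) + e := by omega
          rw [hl, hπ]
          calc u * π * u ^ ((j : ℕ) - 1)
              = u ^ (1 + ((j : ℕ) - 1)) * π := by rw [pow_add, pow_one]; ring
            _ = u ^ (((i : ℕ) - n) + e) * π := by rw [hexp]
            _ = u ^ ((i : ℕ) - n) * (u ^ e * π) := by rw [pow_add, mul_assoc]
        · simp only [if_neg hl]
          set e : ℕ := ((1 - (n + (j : ℕ) - (i : ℕ))) + ((j : ℕ) - 1)) - ((i : ℕ) - n) with he
          have hexp : (j : ℕ) - 1 = ((i : ℕ) - n) + e := by omega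
          calc p (n + (j : ℕ) - (i : ℕ)) * u ^ ((j : ℕ) - 1)
              = u ^ (((i : ℕ) - n) + e) * p (n + (j : ℕ) - (i : ℕ)) := by rw [hexp]; ring
            _ = u ^ ((i : ℕ) - n) * (u ^ e * p (n + (j : ℕ) - (i : ℕ))) := by
                rw [pow_add, mul_assoc]
      · simp only [if_neg hband, zero_mul, mul_zero]
    · simp only [if_neg hjk]
      by_cases hband : (j : ℕ) - k ≤ (i : ℕ) ∧ (i : ℕ) ≤ ((j : ℕ) - k) + k
      · simp only [if_pos hband]
        obtain ⟨h1, h2⟩ := hband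
        have hj := j.isLt
        set e : ℕ := (k - 1 - (k + ((j : ℕ) - k) - (i : ℕ))) - ((i : ℕ) - n) with he
        have hexp : k - 1 - (k + ((j : ℕ) - k) - (i : ℕ)) = ((i : ℕ) - n) + e := by omega
        calc q (k + ((j : ℕ) - k) - (i : ℕ)) * u ^ (0 : ℕ)
            = u ^ (k - 1 - (k + ((j : ℕ) - k) - (i : ℕ))) * κ (k + ((j : ℕ) - k) - (i : ℕ)) := by
              rw [hκ, pow_zero, mul_one]
          _ = u ^ (((i : ℕ) - n) + e) * κ (k + ((j : ℕ) - k) - (i : ℕ)) := by rw [← hexp]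
          _ = u ^ ((i : ℕ) - n) * (u ^ e * κ (k + ((j : ℕ) - k) - (i : ℕ))) := by
              rw [pow_add, mul_assoc]
      · simp only [if_neg hband, zero_mul, mul_zero]
  have hdet := congrArg Matrix.det hmat
  rw [Matrix.det_mul, Matrix.det_mul, Matrix.det_diagonal, Matrix.det_diagonal,
    Finset.prod_pow_eq_pow_sum, Finset.prod_pow_eq_pow_sum] at hdet
  have hsum : (∑ i : Fin (n + k), ((i : ℕ) - n))
      = (∑ j : Fin (n + k), (if (j : ℕ) < k then (j : ℕ) - 1 else 0)) + (k - 1) := by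
    rw [Fin.sum_univ_eq_sum_range (fun i => i - n) (n + k),
      Fin.sum_univ_eq_sum_range (fun j => if j < k then j - 1 else 0) (n + k),
      sum_shift2 n k]
    congr 1
    rw [← Finset.sum_filter]
    apply Finset.sum_congr
    · ext t
      simp only [Finset.mem_filter, Finset.mem_range]
      omega
    · intros; rfl
  rw [hsum, pow_add] at hdet
  refine ⟨(keyT2 n k u p π κ).det, ?_⟩
  have h0 : u ^ (∑ j : Fin (n + k), (if (j : ℕ) < k then (j : ℕ) - 1 else 0)) ≠ 0 :=
    pow_ne_zero _ hu
  apply mul_left_cancel₀ h0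
  linear_combination hdet

private lemma coeff_prod_dvd {R : Type*} [CommRing R] {ι : Type*} (S : Finset ι)
    (c : ι → R) (w : R) : ∀ l : ℕ,
    w ^ (S.card - l) ∣ (∏ s ∈ S, (Polynomial.C (c s) * Polynomial.X + Polynomial.C w)).coeff l := by
  classical
  induction S using Finset.induction_on with
  | empty => intro l; simp
  | @insert a S ha ih =>
    intro l
    rw [Finset.prod_insert ha, Finset.card_insert_of_notMem ha]
    cases l with
    | zero =>
      rw [Polynomial.mul_coeff_zero]
      have h1 : (Polynomial.C (c a) * Polynomial.X + Polynomial.C w).coeff 0 = w := by simp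
      rw [h1, Nat.sub_zero, pow_succ']
      exact mul_dvd_mul_left w (by simpa using ih 0)
    | succ l =>
      rw [add_mul, Polynomial.coeff_add]
      apply dvd_add
      · rw [mul_assoc, Polynomial.coeff_C_mul, Polynomial.coeff_X_mul]
        have h2 := ih l
        have : w ^ (S.card + 1 - (l + 1)) ∣
            (∏ s ∈ S, (Polynomial.C (c s) * Polynomial.X + Polynomial.C w)).coeff l := by
          rw [show S.card + 1 - (l + 1) = S.card - l from by omega]
          exact h2
        exact this.mul_left _
      · rw [Polynomial.coeff_C_mul]
        have h2 := ih (l + 1)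
        have h3 : w ^ (S.card + 1 - (l + 1)) ∣ w * w ^ (S.card - (l + 1)) := by
          rw [← pow_succ']
          exact pow_dvd_pow w (by omega)
        exact h3.trans (mul_dvd_mul_left w h2)

/-- `m^(n-1)·(m-1)^(k-1)` divides the resultant with respect to `g`
(with formal degrees `n` and `k`) of the two polynomials
`P(g) = Π((x − αᵢ)g + m) − Σ aᵢ Π_{s≠i}((x − α_s)g + m)` and
`Q(g) = Π(i(y − β_j)g + (1 − m)) − Σ b_j Π_{s≠j}(i(y − β_s)g + (1 − m))`
in `ℂ[m,x,y][g]`. -/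
theorem stmt13 (n k : ℕ) (hn : 1 ≤ n) (hk : 1 ≤ k)
    (a : Fin n → ℂ) (b : Fin k → ℂ)
    (ha : ∑ i, a i = 1) (hb : ∑ j, b j = 1)
    (α : Fin n → ℝ) (β : Fin k → ℝ)
    (m x y : MvPolynomial (Fin 3) ℂ)
    (hm : m = MvPolynomial.X 0) (hx : x = MvPolynomial.X 1) (hy : y = MvPolynomial.X 2)
    (P Q : Polynomial (MvPolynomial (Fin 3) ℂ))
    (hP : P = (∏ i : Fin n,
          (Polynomial.C (x - MvPolynomial.C ((α i : ℂ))) * Polynomial.X + Polynomial.C m))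
        - ∑ i : Fin n, Polynomial.C (MvPolynomial.C (a i)) *
            ∏ s ∈ Finset.univ.erase i,
              (Polynomial.C (x - MvPolynomial.C ((α s : ℂ))) * Polynomial.X + Polynomial.C m))
    (hQ : Q = (∏ j : Fin k,
          (Polynomial.C (MvPolynomial.C Complex.I * (y - MvPolynomial.C ((β j : ℂ)))) *
            Polynomial.X + Polynomial.C (1 - m)))
        - ∑ j : Fin k, Polynomial.C (MvPolynomial.C (b j)) *
            ∏ s ∈ Finset.univ.erase j,
              (Polynomial.C (MvPolynomial.C Complex.I * (y - MvPolynomial.C ((β s : ℂ)))) *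
                Polynomial.X + Polynomial.C (1 - m))) :
    m ^ (n - 1) * (m - 1) ^ (k - 1) ∣ (sylvester n k P.coeff Q.coeff).det := by
  -- basic nonvanishing facts
  have hm0 : m ≠ 0 := by rw [hm]; exact MvPolynomial.X_ne_zero 0
  have hm1 : m - 1 ≠ 0 := by
    rw [hm]
    intro h
    have h' : MvPolynomial.X (R := ℂ) (0 : Fin 3) = 1 := by
      have := sub_eq_zero.mp h
      exact this
    have := congrArg (MvPolynomial.eval (fun _ => (0 : ℂ))) h'
    simp at this
  -- divisibility of coefficients of P by powers of m
  have hp : ∀ l, m ^ (n - 1 - l) ∣ P.coeff l := by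
    intro l
    rw [hP, Polynomial.coeff_sub]
    apply dvd_sub
    · have h1 := coeff_prod_dvd (Finset.univ : Finset (Fin n))
        (fun i => x - MvPolynomial.C ((α i : ℂ))) m l
      rw [Finset.card_univ, Fintype.card_fin] at h1
      exact (pow_dvd_pow m (by omega)).trans h1
    · rw [Polynomial.finset_sum_coeff]
      apply Finset.dvd_sum
      intro i _
      rw [Polynomial.coeff_C_mul]
      have h1 := coeff_prod_dvd (Finset.univ.erase i)
        (fun s => x - MvPolynomial.C ((α s : ℂ))) m l
      rw [Finset.card_erase_of_mem (Finset.mem_univ i), Finset.card_univ, Fintype.card_fin] at h1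
      exact h1.mul_left _
  -- divisibility of coefficients of Q by powers of (m - 1)
  have hdvd1m : (m - 1) ∣ (1 - m) := ⟨-1, by ring⟩
  have hq2 : ∀ l, (m - 1) ^ (k - 1 - l) ∣ Q.coeff l := by
    intro l
    rw [hQ, Polynomial.coeff_sub]
    apply dvd_sub
    · have h1 := coeff_prod_dvd (Finset.univ : Finset (Fin k))
        (fun j => MvPolynomial.C Complex.I * (y - MvPolynomial.C ((β j : ℂ)))) (1 - m) l
      rw [Finset.card_univ, Fintype.card_fin] at h1
      exact ((pow_dvd_pow_of_dvd hdvd1m _).trans ((pow_dvd_pow (1 - m) (by omega)).trans h1))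
    · rw [Polynomial.finset_sum_coeff]
      apply Finset.dvd_sum
      intro j _
      rw [Polynomial.coeff_C_mul]
      have h1 := coeff_prod_dvd (Finset.univ.erase j)
        (fun s => MvPolynomial.C Complex.I * (y - MvPolynomial.C ((β s : ℂ)))) (1 - m) l
      rw [Finset.card_erase_of_mem (Finset.mem_univ j), Finset.card_univ, Fintype.card_fin] at h1
      exact ((pow_dvd_pow_of_dvd hdvd1m _).trans h1).mul_left _
  -- constant coefficient computations
  have hPc0 : P.coeff 0 = m ^ n - m ^ (n - 1) := by
    rw [hP, Polynomial.coeff_sub, Polynomial.coeff_zero_eq_eval_zero,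
      Polynomial.finset_sum_coeff]
    have e1 : Polynomial.eval 0 (∏ i : Fin n,
        (Polynomial.C (x - MvPolynomial.C ((α i : ℂ))) * Polynomial.X + Polynomial.C m))
        = m ^ n := by
      rw [Polynomial.eval_prod]
      simp [Finset.prod_const, Finset.card_univ]
    have e2 : ∀ i : Fin n, (Polynomial.C (MvPolynomial.C (a i)) *
        ∏ s ∈ Finset.univ.erase i,
          (Polynomial.C (x - MvPolynomial.C ((α s : ℂ))) * Polynomial.X + Polynomial.C m)).coeff 0
        = MvPolynomial.C (a i) * m ^ (n - 1) := by
      intro i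
      rw [Polynomial.coeff_C_mul, Polynomial.coeff_zero_eq_eval_zero, Polynomial.eval_prod]
      simp [Finset.prod_const, Finset.card_erase_of_mem (Finset.mem_univ i), Finset.card_univ]
    rw [e1]
    congr 1
    rw [Finset.sum_congr rfl fun i _ => e2 i, ← Finset.sum_mul, ← map_sum, ha, map_one, one_mul]
  have hQc0 : Q.coeff 0 = (1 - m) ^ k - (1 - m) ^ (k - 1) := by
    rw [hQ, Polynomial.coeff_sub, Polynomial.coeff_zero_eq_eval_zero,
      Polynomial.finset_sum_coeff]
    have e1 : Polynomial.eval 0 (∏ j : Fin k,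
        (Polynomial.C (MvPolynomial.C Complex.I * (y - MvPolynomial.C ((β j : ℂ)))) *
          Polynomial.X + Polynomial.C (1 - m))) = (1 - m) ^ k := by
      rw [Polynomial.eval_prod]
      simp [Finset.prod_const, Finset.card_univ]
    have e2 : ∀ j : Fin k, (Polynomial.C (MvPolynomial.C (b j)) *
        ∏ s ∈ Finset.univ.erase j,
          (Polynomial.C (MvPolynomial.C Complex.I * (y - MvPolynomial.C ((β s : ℂ)))) *
            Polynomial.X + Polynomial.C (1 - m))).coeff 0
        = MvPolynomial.C (b j) * (1 - m) ^ (k - 1) := by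
      intro j
      rw [Polynomial.coeff_C_mul, Polynomial.coeff_zero_eq_eval_zero, Polynomial.eval_prod]
      simp [Finset.prod_const, Finset.card_erase_of_mem (Finset.mem_univ j), Finset.card_univ]
    rw [e1]
    congr 1
    rw [Finset.sum_congr rfl fun j _ => e2 j, ← Finset.sum_mul, ← map_sum, hb, map_one, one_mul]
  have hq0 : m ∣ Q.coeff 0 := by
    obtain ⟨k', rfl⟩ : ∃ k', k = k' + 1 := ⟨k - 1, by omega⟩
    rw [hQc0, Nat.add_sub_cancel]
    exact ⟨-(1 - m) ^ k', by ring⟩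
  have hp0 : (m - 1) ∣ P.coeff 0 := by
    obtain ⟨n', rfl⟩ : ∃ n', n = n' + 1 := ⟨n - 1, by omega⟩
    rw [hPc0, Nat.add_sub_cancel]
    exact ⟨m ^ n', by ring⟩
  have hd1 : m ^ (n - 1) ∣ (sylvester n k P.coeff Q.coeff).det :=
    key n k m hm0 P.coeff Q.coeff hp hq0
  have hd2 : (m - 1) ^ (k - 1) ∣ (sylvester n k P.coeff Q.coeff).det :=
    key2 n k (m - 1) hm1 P.coeff Q.coeff hq2 hp0
  have hcop : IsCoprime m (m - 1) := ⟨1, -1, by ring⟩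
  exact (hcop.pow).mul_dvd hd1 hd2
end

section
/- Let n, k ≥ 1, let θ ∈ (0, π/4), and set x₀ = cos θ and y₀ = sin θ. Then there is no m ∈ ℂ satisfying both ((m−1)x₀ + i·m·y₀)^{(n−1)(k−1)}·(m·x₀ + i·(m−1)·y₀) = 0 and ((m−1)x₀ − i·m·y₀)^{(n−1)(k−1)}·(m·x₀ − i·(m−1)·y₀) = 0, where i is the imaginary unit. Equivalently, the one-variable complex polynomials f₂(m) = (x₀+iy₀)^{n+k−2}((m−1)x₀ + imy₀)^{(n−1)(k−1)}(mx₀ + i(m−1)y₀) and f̄₂(m) = (x₀−iy₀)^{n+k−2}((m−1)x₀ − imy₀)^{(n−1)(k−1)}(mx₀ − i(m−1)y₀) have no common root in ℂ. -/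
open Set Real

theorem stmt15 (n k : ℕ) (hn : 1 ≤ n) (hk : 1 ≤ k)
    (θ : ℝ) (hθ : θ ∈ Ioo (0 : ℝ) (Real.pi / 4))
    (x₀ y₀ : ℝ) (hx₀ : x₀ = Real.cos θ) (hy₀ : y₀ = Real.sin θ) :
    -- no common root of the two factors
    (¬ ∃ m : ℂ,
      ((m - 1) * (x₀ : ℂ) + Complex.I * m * (y₀ : ℂ)) ^ ((n - 1) * (k - 1)) *
          (m * (x₀ : ℂ) + Complex.I * (m - 1) * (y₀ : ℂ)) = 0
      ∧ ((m - 1) * (x₀ : ℂ) - Complex.I * m * (y₀ : ℂ)) ^ ((n - 1) * (k - 1)) *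
          (m * (x₀ : ℂ) - Complex.I * (m - 1) * (y₀ : ℂ)) = 0)
    -- equivalently, f₂ and its formal conjugate have no common root
    ∧ (¬ ∃ m : ℂ,
      ((x₀ : ℂ) + Complex.I * (y₀ : ℂ)) ^ (n + k - 2) *
          ((m - 1) * (x₀ : ℂ) + Complex.I * m * (y₀ : ℂ)) ^ ((n - 1) * (k - 1)) *
          (m * (x₀ : ℂ) + Complex.I * (m - 1) * (y₀ : ℂ)) = 0
      ∧ ((x₀ : ℂ) - Complex.I * (y₀ : ℂ)) ^ (n + k - 2) *
          ((m - 1) * (x₀ : ℂ) - Complex.I * m * (y₀ : ℂ)) ^ ((n - 1) * (k - 1)) *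
          (m * (x₀ : ℂ) - Complex.I * (m - 1) * (y₀ : ℂ)) = 0) := by
  have hpi := Real.pi_pos
  have hx : 0 < x₀ := by
    rw [hx₀]; apply Real.cos_pos_of_mem_Ioo
    constructor <;> [linarith [hθ.1]; linarith [hθ.2]]
  have hy : 0 < y₀ := by
    rw [hy₀]; exact Real.sin_pos_of_pos_of_lt_pi hθ.1 (by linarith [hθ.2])
  have hyx : y₀ < x₀ := by
    rw [hx₀, hy₀, ← Real.sin_pi_div_two_sub]
    exact Real.sin_lt_sin_of_lt_of_le_pi_div_two (by linarith [hθ.1])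
      (by linarith [hθ.1]) (by linarith [hθ.2])
  set X : ℂ := (x₀ : ℂ)
  set Y : ℂ := (y₀ : ℂ)
  have hX : X ≠ 0 := by
    simp only [X, Ne, Complex.ofReal_eq_zero]; linarith
  have hY : Y ≠ 0 := by
    simp only [Y, Ne, Complex.ofReal_eq_zero]; linarith
  have hXY : x₀ ^ 2 ≠ y₀ ^ 2 := by nlinarith
  have key : ¬ ∃ m : ℂ,
      ((m - 1) * X + Complex.I * m * Y) ^ ((n - 1) * (k - 1)) *
          (m * X + Complex.I * (m - 1) * Y) = 0
      ∧ ((m - 1) * X - Complex.I * m * Y) ^ ((n - 1) * (k - 1)) *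
          (m * X - Complex.I * (m - 1) * Y) = 0 := by
    rintro ⟨m, h1, h2⟩
    have h1' : (m - 1) * X + Complex.I * m * Y = 0 ∨
        m * X + Complex.I * (m - 1) * Y = 0 := by
      rcases mul_eq_zero.1 h1 with h | h
      · exact Or.inl (pow_eq_zero_iff'.1 h).1
      · exact Or.inr h
    have h2' : (m - 1) * X - Complex.I * m * Y = 0 ∨
        m * X - Complex.I * (m - 1) * Y = 0 := by
      rcases mul_eq_zero.1 h2 with h | h
      · exact Or.inl (pow_eq_zero_iff'.1 h).1
      · exact Or.inr h
    rcases h1' with e1 | e1 <;> rcases h2' with e2 | e2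
    · -- A1 = 0, A2 = 0 : get X*Y = 0
      have : X * Y = 0 := by
        linear_combination (-Complex.I/2) * ((X - Complex.I*Y) * e1 - (X + Complex.I*Y) * e2) + X*Y*Complex.I_sq
      rcases mul_eq_zero.1 this with h | h
      exacts [hX h, hY h]
    · -- A1 = 0, B2 = 0 : get X^2 = Y^2
      have : X ^ 2 = Y ^ 2 := by
        linear_combination (X + Complex.I*Y) * e2 - (X - Complex.I*Y) * e1 - Y^2*Complex.I_sq
      apply hXY
      have := this
      simp only [X, Y] at this
      exact_mod_cast this
    · -- B1 = 0, A2 = 0 : get X^2 = Y^2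
      have : X ^ 2 = Y ^ 2 := by
        linear_combination (X - Complex.I*Y) * e1 - (X + Complex.I*Y) * e2 - Y^2*Complex.I_sq
      apply hXY
      simp only [X, Y] at this
      exact_mod_cast this
    · -- B1 = 0, B2 = 0 : get X*Y = 0
      have : X * Y = 0 := by
        linear_combination (Complex.I/2) * ((X - Complex.I*Y) * e1 - (X + Complex.I*Y) * e2) + X*Y*Complex.I_sq
      rcases mul_eq_zero.1 this with h | h
      exacts [hX h, hY h]
  constructor
  · exact key
  · rintro ⟨m, h1, h2⟩
    have hP : X + Complex.I * Y ≠ 0 := by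
      intro h
      have := congrArg Complex.re h
      simp [X, Y, Complex.add_re, Complex.mul_re] at this
      linarith
    have hQ : X - Complex.I * Y ≠ 0 := by
      intro h
      have := congrArg Complex.re h
      simp [X, Y, Complex.sub_re, Complex.mul_re] at this
      linarith
    apply key
    refine ⟨m, ?_, ?_⟩
    · have := h1
      rw [mul_assoc] at this
      exact (mul_eq_zero.1 this).resolve_left (pow_ne_zero _ hP)
    · have := h2
      rw [mul_assoc] at this
      exact (mul_eq_zero.1 this).resolve_left (pow_ne_zero _ hQ)
end

section
/- Let α, α' ∈ ℝ with α ≠ α', set 𝒜 = α' − α and I_p = {iy : y ∈ ℝ, |y| > 1/|𝒜|}, and define B_p(w) = (α+α')/2 + (1 + √(𝒜²w² + 1))/(2w) for w ∈ ℂ ∖ (I_p ∪ {0}). If (g_k) is a sequence in ℂ ∖ (I_p ∪ {0}) with |g_k| → ∞ and B_p(g_k) → z for some z ∈ ℂ, then z = α or z = α'. -/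
/-!
Put `d = B_p(w) - (α + α')/2` and `s = √(𝒜²w² + 1)`, so that `2wd = 1 + s`. Squaring
`2wd - 1 = s` and dividing by `w²` gives `4d² - 4d/w = 𝒜²` for every admissible `w`. Along
`g_k → ∞` the term `4d/w` vanishes, so the limit `u = z - (α + α')/2` satisfies `(2u)² = 𝒜²`,
i.e. `z = (α + α')/2 ± (α' - α)/2`.
-/

open Filter Topology Bornology

lemma Complex.cpow_one_div_two_sq (x : ℂ) : (x ^ ((1 : ℂ) / 2)) ^ 2 = x := by
  simp

lemma four_mul_sq_sub_four_mul_mul_inv_eq {K : Type*} [Field K] {a w s d : K} (hw : w ≠ 0)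
    (hs : s ^ 2 = a ^ 2 * w ^ 2 + 1) (hd : 2 * w * d = 1 + s) :
    4 * d ^ 2 - 4 * d * w⁻¹ = a ^ 2 := by
  have hsq : (2 * w * d - 1) ^ 2 = a ^ 2 * w ^ 2 + 1 := by rw [hd, add_sub_cancel_left, hs]
  calc 4 * d ^ 2 - 4 * d * w⁻¹ = ((2 * w * d - 1) ^ 2 - 1) / w ^ 2 := by field_simp; ring
    _ = a ^ 2 := by rw [hsq]; field_simp; ring

lemma sq_two_mul_eq_of_tendsto {ι K : Type*} [NormedField K] {l : Filter ι} [l.NeBot]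
    {d w : ι → K} {u a : K} (hd : Tendsto d l (𝓝 u)) (hw : Tendsto w l (cobounded K))
    (h : ∀ i, 4 * d i ^ 2 - 4 * d i * (w i)⁻¹ = a ^ 2) :
    (2 * u) ^ 2 = a ^ 2 := by
  have hlim : Tendsto (fun i => 4 * d i ^ 2 - 4 * d i * (w i)⁻¹) l (𝓝 (4 * u ^ 2 - 4 * u * 0)) :=
    ((hd.pow 2).const_mul 4).sub ((hd.const_mul 4).mul (tendsto_inv₀_cobounded.comp hw))
  simp only [h, tendsto_const_nhds_iff] at hlim
  linear_combination -hlim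

theorem stmt17_general (α α' : ℝ)
    (𝒜 : ℝ) (h𝒜 : 𝒜 = α' - α)
    (Ip : Set ℂ)
    (Bp : ℂ → ℂ)
    (hBp : ∀ w : ℂ, Bp w = (((α + α') / 2 : ℝ) : ℂ) +
      (1 + ((𝒜 : ℂ) ^ 2 * w ^ 2 + 1) ^ ((1 : ℂ) / 2)) / (2 * w))
    (g : ℕ → ℂ) (hgdom : ∀ j, g j ∉ Ip ∧ g j ≠ 0)
    (hginf : Tendsto (fun j => ‖g j‖) atTop atTop)
    (z : ℂ) (hz : Tendsto (fun j => Bp (g j)) atTop (nhds z)) :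
    z = (α : ℂ) ∨ z = (α' : ℂ) := by
  set c : ℂ := (((α + α') / 2 : ℝ) : ℂ) with hc
  have hshift (j : ℕ) : 4 * (Bp (g j) - c) ^ 2 - 4 * (Bp (g j) - c) * (g j)⁻¹ = (𝒜 : ℂ) ^ 2 := by
    have h2g : 2 * g j ≠ 0 := mul_ne_zero two_ne_zero (hgdom j).2
    refine four_mul_sq_sub_four_mul_mul_inv_eq (hgdom j).2 (Complex.cpow_one_div_two_sq _) ?_
    rw [hBp, add_sub_cancel_left, mul_div_cancel₀ _ h2g]
  have hsq : (2 * (z - c)) ^ 2 = (𝒜 : ℂ) ^ 2 :=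
    sq_two_mul_eq_of_tendsto (hz.sub_const c) (tendsto_norm_atTop_iff_cobounded.mp hginf) hshift
  rw [hc, h𝒜] at hsq
  push_cast at hsq
  rcases sq_eq_sq_iff_eq_or_eq_neg.mp hsq with h | h
  · exact Or.inr (by linear_combination h / 2)
  · exact Or.inl (by linear_combination h / 2)

theorem stmt17 (α α' : ℝ) (hαα : α ≠ α')
    (𝒜 : ℝ) (h𝒜 : 𝒜 = α' - α)
    (Ip : Set ℂ) (hIp : Ip = {w : ℂ | w.re = 0 ∧ 1 / |𝒜| < |w.im|})
    (Bp : ℂ → ℂ)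
    (hBp : ∀ w : ℂ, Bp w = (((α + α') / 2 : ℝ) : ℂ) +
      (1 + ((𝒜 : ℂ) ^ 2 * w ^ 2 + 1) ^ ((1 : ℂ) / 2)) / (2 * w))
    (g : ℕ → ℂ) (hgdom : ∀ j, g j ∉ Ip ∧ g j ≠ 0)
    (hginf : Tendsto (fun j => ‖g j‖) atTop atTop)
    (z : ℂ) (hz : Tendsto (fun j => Bp (g j)) atTop (nhds z)) :
    z = (α : ℂ) ∨ z = (α' : ℂ) :=
  stmt17_general α α' 𝒜 h𝒜 Ip Bp hBp g hgdom hginf z hz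
end

section
/- Let α, α', β, β' ∈ ℝ with α ≠ α' and β ≠ β', set 𝒜 = α' − α and 𝓑 = β' − β. Let g ∈ ℂ with g ≠ 0, g ∉ {iy : y ∈ ℝ, |y| > 1/|𝒜|}, and i·g ∉ {iy : y ∈ ℝ, |y| > 1/|𝓑|} (equivalently 𝒜²g² + 1 ∉ (−∞,0) and 1 − 𝓑²g² ∉ (−∞,0)). Define z = x + iy = (α+α')/2 + i(β+β')/2 + (√(𝒜²g² + 1) + √(1 − 𝓑²g²))/(2g). If (x − (α+α')/2)² − (y − (β+β')/2)² = (𝒜² − 𝓑²)/4, then |(x − (α+α')/2)·(y − (β+β')/2)| > |𝒜𝓑|/4. In particular, z does not lie in the rectangle [min(α,α'), max(α,α')] × [min(β,β'), max(β,β')]. -/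
open Set

lemma sqrt_sq' (w : ℂ) : (w ^ ((1:ℂ)/2))^2 = w := by
  rcases eq_or_ne w 0 with h | h
  · simp [h, Complex.zero_cpow (by norm_num : (1:ℂ)/2 ≠ 0)]
  · rw [sq, ← Complex.cpow_add _ _ h]
    norm_num

lemma sqrt_re_nonneg' (w : ℂ) : 0 ≤ (w ^ ((1:ℂ)/2)).re := by
  rcases eq_or_ne w 0 with h | h
  · simp [h, Complex.zero_cpow (by norm_num : (1:ℂ)/2 ≠ 0)]
  · rw [Complex.cpow_def_of_ne_zero h, Complex.exp_re]
    have him : (Complex.log w * ((1:ℂ)/2)).im = w.arg / 2 := by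
      simp [Complex.mul_im, Complex.log_im]
      ring
    rw [him]
    have h1 := Complex.arg_le_pi w
    have h2 := Complex.neg_pi_lt_arg w
    have : 0 ≤ Real.cos (w.arg / 2) :=
      Real.cos_nonneg_of_mem_Icc ⟨by linarith, by linarith⟩
    positivity

set_option maxHeartbeats 1000000 in
theorem stmt19 (α α' β β' : ℝ) (hαα : α ≠ α') (hββ : β ≠ β')
    (𝒜 ℬ : ℝ) (h𝒜 : 𝒜 = α' - α) (hℬ : ℬ = β' - β)
    (Ip Iq : Set ℂ)
    (hIp : Ip = {w : ℂ | w.re = 0 ∧ 1 / |𝒜| < |w.im|})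
    (hIq : Iq = {w : ℂ | w.re = 0 ∧ 1 / |ℬ| < |w.im|})
    (g : ℂ) (hg0 : g ≠ 0) (hg1 : g ∉ Ip) (hg2 : Complex.I * g ∉ Iq)
    (z : ℂ)
    (hz : z = (((α + α') / 2 : ℝ) : ℂ) + Complex.I * (((β + β') / 2 : ℝ) : ℂ) +
      (((𝒜 : ℂ) ^ 2 * g ^ 2 + 1) ^ ((1 : ℂ) / 2) +
        (1 - (ℬ : ℂ) ^ 2 * g ^ 2) ^ ((1 : ℂ) / 2)) / (2 * g))
    (hhyp : (z.re - (α + α') / 2) ^ 2 - (z.im - (β + β') / 2) ^ 2 = (𝒜 ^ 2 - ℬ ^ 2) / 4) :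
    |𝒜 * ℬ| / 4 < |(z.re - (α + α') / 2) * (z.im - (β + β') / 2)|
    ∧ ¬ (z.re ∈ Icc (min α α') (max α α') ∧ z.im ∈ Icc (min β β') (max β β')) := by
  have hA : 𝒜 ≠ 0 := by rw [h𝒜]; exact sub_ne_zero.mpr (Ne.symm hαα)
  have hB : ℬ ≠ 0 := by rw [hℬ]; exact sub_ne_zero.mpr (Ne.symm hββ)
  set Sp := ((𝒜 : ℂ) ^ 2 * g ^ 2 + 1) ^ ((1 : ℂ) / 2) with hSpdef
  set Sq := (1 - (ℬ : ℂ) ^ 2 * g ^ 2) ^ ((1 : ℂ) / 2) with hSqdef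
  set u := z.re - (α + α') / 2 with hudef
  set v := z.im - (β + β') / 2 with hvdef
  have hp2 : Sp ^ 2 = (𝒜 : ℂ) ^ 2 * g ^ 2 + 1 := sqrt_sq' _
  have hq2 : Sq ^ 2 = 1 - (ℬ : ℂ) ^ 2 * g ^ 2 := sqrt_sq' _
  have hpre : 0 ≤ Sp.re := sqrt_re_nonneg' _
  have hqre : 0 ≤ Sq.re := sqrt_re_nonneg' _
  -- express u, v
  clear_value Sp Sq
  have hu : u = ((Sp + Sq) / (2 * g)).re := by
    rw [hudef, hz]; simp
  have hv : v = ((Sp + Sq) / (2 * g)).im := by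
    rw [hvdef, hz]; simp
  have hsum : Sp + Sq = 2 * g * ((u : ℂ) + (v : ℂ) * Complex.I) := by
    rw [hu, hv, Complex.re_add_im]
    field_simp
  clear_value u v
  have hhypC : (u : ℂ) ^ 2 - (v : ℂ) ^ 2 = ((𝒜 : ℂ) ^ 2 - (ℬ : ℂ) ^ 2) / 4 := by
    have := congrArg (Complex.ofReal) hhyp
    push_cast at this
    convert this using 2 <;> push_cast <;> ring
  have hP : 1 + Sp * Sq = 4 * (u : ℂ) * (v : ℂ) * Complex.I * g ^ 2 := by
    linear_combination ((Sp + Sq + 2 * g * ((u : ℂ) + (v : ℂ) * Complex.I)) / 2) * hsum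
      - (1/2) * hp2 - (1/2) * hq2 + 2 * g ^ 2 * hhypC + 2 * g ^ 2 * (v : ℂ) ^ 2 * Complex.I_sq
  -- key inequality
  have key : |𝒜 * ℬ| / 4 < |u * v| := by
    by_contra hc
    push_neg at hc
    set t : ℝ := 2 * u * v with htdef
    clear_value t
    have ht2 : 4 * t ^ 2 ≤ 𝒜 ^ 2 * ℬ ^ 2 := by
      have h1 : (u * v) ^ 2 ≤ (𝒜 * ℬ) ^ 2 / 16 := by
        nlinarith [abs_nonneg (u * v), abs_nonneg (𝒜 * ℬ), sq_abs (u * v), sq_abs (𝒜 * ℬ)]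
      rw [htdef]
      nlinarith [h1]
    have hPQ : (Sp * Sq) ^ 2 = ((𝒜 : ℂ) ^ 2 * g ^ 2 + 1) * (1 - (ℬ : ℂ) ^ 2 * g ^ 2) := by
      rw [mul_pow, hp2, hq2]
    have htC : (t : ℂ) = 2 * (u : ℂ) * (v : ℂ) := by push_cast [htdef]; ring
    have hPval : Sp * Sq = 2 * (t:ℂ) * Complex.I * g ^ 2 - 1 := by
      rw [htC]; linear_combination hP
    have hstar4 : (((𝒜 ^ 2 * ℬ ^ 2 - 4 * t ^ 2 : ℝ) : ℂ) * g ^ 2) * g ^ 2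
        = (((𝒜 ^ 2 - ℬ ^ 2 : ℝ) : ℂ) + 4 * (t : ℂ) * Complex.I) * g ^ 2 := by
      rw [hPval] at hPQ
      push_cast
      linear_combination hPQ - 4 * (t:ℂ) ^ 2 * g ^ 4 * Complex.I_sq
    have hstar : ((𝒜 ^ 2 * ℬ ^ 2 - 4 * t ^ 2 : ℝ) : ℂ) * g ^ 2
        = ((𝒜 ^ 2 - ℬ ^ 2 : ℝ) : ℂ) + 4 * (t : ℂ) * Complex.I :=
      mul_right_cancel₀ (pow_ne_zero 2 hg0) hstar4
    push_cast at hstar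
    rcases lt_or_eq_of_le ht2 with hlt | heq
    · -- strict case
      set m := Real.sqrt (𝒜 ^ 2 * ℬ ^ 2 - 4 * t ^ 2) with hmdef
      have hm2 : m ^ 2 = 𝒜 ^ 2 * ℬ ^ 2 - 4 * t ^ 2 := Real.sq_sqrt (by linarith)
      have hmpos : 0 < m := Real.sqrt_pos.mpr (by linarith)
      clear_value m
      have hmC : ((m:ℂ)) ^ 2 = (𝒜:ℂ) ^ 2 * (ℬ:ℂ) ^ 2 - 4 * (t:ℂ) ^ 2 := by
        have := congrArg Complex.ofReal hm2
        push_cast at this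
        exact this
      have hsumsq : (Sp + Sq) ^ 2 = ((m:ℂ) * g ^ 2) ^ 2 := by
        linear_combination hp2 + hq2 + 2 * hPval - g ^ 2 * hstar - g ^ 4 * hmC
      have hfac : (Sp + Sq - (m:ℂ) * g ^ 2) * (Sp + Sq + (m:ℂ) * g ^ 2) = 0 := by
        linear_combination hsumsq
      rcases mul_eq_zero.mp hfac with h | h
      · -- Sp + Sq = m g^2
        have hse : Sp + Sq = (m:ℂ) * g ^ 2 := by linear_combination h
        have hdiff : (m:ℂ) * (Sp - Sq) = ((𝒜 ^ 2 + ℬ ^ 2 : ℝ) : ℂ) := by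
          apply mul_right_cancel₀ (pow_ne_zero 2 hg0)
          linear_combination (norm := (push_cast; ring1)) hp2 - hq2 - (Sp - Sq) * hse
        have hq' : ((2 * m : ℝ) : ℂ) * Sq = ((-2 * ℬ ^ 2 : ℝ) : ℂ) + 4 * (t:ℂ) * Complex.I := by
          push_cast
          linear_combination (norm := (push_cast; ring1)) (m:ℂ) * hse - hdiff + hstar + g ^ 2 * hmC
        have hre := congrArg Complex.re hq'
        simp [Complex.add_re, Complex.mul_re, Complex.ofReal_re, Complex.ofReal_im,
          Complex.I_re, Complex.I_im, ← Complex.ofReal_pow] at hre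
        have hs1 : 0 ≤ 2 * m * Sq.re := mul_nonneg (by linarith) hqre
        have hB2 : 0 < ℬ ^ 2 := lt_of_le_of_ne (sq_nonneg _) (Ne.symm (pow_ne_zero 2 hB))
        linarith
      · -- Sp + Sq = -m g^2
        have hse : Sp + Sq = -((m:ℂ) * g ^ 2) := by linear_combination h
        have hdiff : (m:ℂ) * (Sp - Sq) = -((𝒜 ^ 2 + ℬ ^ 2 : ℝ) : ℂ) := by
          apply mul_right_cancel₀ (pow_ne_zero 2 hg0)
          linear_combination (norm := (push_cast; ring1)) (Sp - Sq) * hse - hp2 + hq2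
        have hp' : ((2 * m : ℝ) : ℂ) * Sp = ((-2 * 𝒜 ^ 2 : ℝ) : ℂ) - 4 * (t:ℂ) * Complex.I := by
          push_cast
          linear_combination (norm := (push_cast; ring1)) (m:ℂ) * hse + hdiff - hstar - g ^ 2 * hmC
        have hre := congrArg Complex.re hp'
        simp [Complex.sub_re, Complex.add_re, Complex.mul_re, Complex.ofReal_re, Complex.ofReal_im,
          Complex.I_re, Complex.I_im, ← Complex.ofReal_pow] at hre
        have hs1 : 0 ≤ 2 * m * Sp.re := mul_nonneg (by linarith) hpre
        have hA2 : 0 < 𝒜 ^ 2 := lt_of_le_of_ne (sq_nonneg _) (Ne.symm (pow_ne_zero 2 hA))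
        linarith
    · -- equality case
      have h0 : ((𝒜:ℂ) ^ 2 * (ℬ:ℂ) ^ 2 - 4 * (t:ℂ) ^ 2) = 0 := by
        have : ((𝒜 ^ 2 * ℬ ^ 2 - 4 * t ^ 2 : ℝ) : ℂ) = ((0:ℝ):ℂ) := by
          norm_cast; linarith
        push_cast at this
        linear_combination this
      rw [h0, zero_mul] at hstar
      have him := congrArg Complex.im hstar
      simp [Complex.add_im, Complex.mul_im, Complex.ofReal_re, Complex.ofReal_im,
        Complex.I_re, Complex.I_im, ← Complex.ofReal_pow] at him
      have h𝒜2 : 0 < 𝒜 ^ 2 := lt_of_le_of_ne (sq_nonneg _) (Ne.symm (pow_ne_zero 2 hA))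
      have hℬ2 : 0 < ℬ ^ 2 := lt_of_le_of_ne (sq_nonneg _) (Ne.symm (pow_ne_zero 2 hB))
      nlinarith [mul_pos h𝒜2 hℬ2, him, heq]
  refine ⟨key, ?_⟩
  rintro ⟨hre, him⟩
  rw [mem_Icc] at hre him
  have hAabs : |𝒜| = max α α' - min α α' := by
    rw [h𝒜, abs_sub_comm α' α, ← max_sub_min_eq_abs]
    rw [max_comm α' α, min_comm α' α]
  have hBabs : |ℬ| = max β β' - min β β' := by
    rw [hℬ, abs_sub_comm β' β, ← max_sub_min_eq_abs]
    rw [max_comm β' β, min_comm β' β]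
  have hminmaxα : min α α' + max α α' = α + α' := min_add_max α α'
  have hminmaxβ : min β β' + max β β' = β + β' := min_add_max β β'
  have hu_le : |u| ≤ |𝒜| / 2 := by
    rw [abs_le, hudef, hAabs]
    constructor <;> linarith [hre.1, hre.2]
  have hv_le : |v| ≤ |ℬ| / 2 := by
    rw [abs_le, hvdef, hBabs]
    constructor <;> linarith [him.1, him.2]
  rw [abs_mul] at key
  rw [abs_mul] at key
  nlinarith [abs_nonneg u, abs_nonneg v, abs_nonneg 𝒜, abs_nonneg ℬ,
    mul_le_mul hu_le hv_le (abs_nonneg v) (by positivity)]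
end
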